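/- arXiv:1703.05252 — 9 statements merged into one kernel-verified Lean document; each statement's English description precedes it below -/
import Mathlib

section
/- Let H be a t-uniform hypergraph on vertex set U, and let x be an optimal legal weighting of H (i.e., one achieving the Lagrangian λ(H)) such that the number of vertices with non-zero weight is minimal among all optimal weightings. Then for any two vertices u, w ∈ U with x(u) > 0 and x(w) > 0, there exists an edge of H containing both u and w. -/
/-- A legal weighting: nonnegative weights summing to 1. -/
def IsLegalWeighting {U : Type*} [Fintype U] (x : U → ℝ) : Prop :=
  (∀ u, 0 ≤ x u) ∧ ∑ u, x u = 1

/-- The weight polynomial of a hypergraph evaluated at a weighting. -/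
def weightPoly {U : Type*} [Fintype U] (H : Finset (Finset U)) (x : U → ℝ) : ℝ :=
  ∑ e ∈ H, ∏ u ∈ e, x u

/-- The Lagrangian of a hypergraph: the supremum (= maximum) of the weight
polynomial over legal weightings. -/
noncomputable def lagrangian {U : Type*} [Fintype U] (H : Finset (Finset U)) : ℝ :=
  sSup {w | ∃ x, IsLegalWeighting x ∧ weightPoly H x = w}

lemma weightPoly_le_lagrangian {U : Type*} [Fintype U] (H : Finset (Finset U))
    (z : U → ℝ) (hz : IsLegalWeighting z) : weightPoly H z ≤ lagrangian H := by
  apply le_csSup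
  · refine ⟨(H.card : ℝ), ?_⟩
    rintro r ⟨y, hy, rfl⟩
    have h1 : ∀ v : U, y v ≤ 1 := by
      intro v
      calc y v ≤ ∑ i, y i := Finset.single_le_sum (fun i _ => hy.1 i) (Finset.mem_univ v)
        _ = 1 := hy.2
    calc weightPoly H y = ∑ e ∈ H, ∏ v ∈ e, y v := rfl
      _ ≤ ∑ e ∈ H, 1 := by
          refine Finset.sum_le_sum fun e _ => ?_
          exact Finset.prod_le_one (fun v _ => hy.1 v) (fun v _ => h1 v)
      _ = (H.card : ℝ) := by simp
  · exact ⟨z, hz, rfl⟩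

/-- Frankl–Rödl: in an optimal weighting of a `t`-uniform hypergraph with minimal
support, any two distinct vertices of positive weight lie in a common edge. -/
theorem frankl_rodl_support {U : Type*} [Fintype U] [DecidableEq U] (t : ℕ)
    (H : Finset (Finset U)) (hH : ∀ e ∈ H, e.card = t)
    (x : U → ℝ) (hx : IsLegalWeighting x)
    (hopt : weightPoly H x = lagrangian H)
    (hmin : ∀ y : U → ℝ, IsLegalWeighting y → weightPoly H y = lagrangian H →
      (Function.support x).ncard ≤ (Function.support y).ncard)
    (u w : U) (huw : u ≠ w) (hu : 0 < x u) (hw : 0 < x w) :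
    ∃ e ∈ H, u ∈ e ∧ w ∈ e := by
  by_contra hno
  push_neg at hno
  -- the shifted weighting
  set y : ℝ → U → ℝ := fun s v => if v = u then x u - s else if v = w then x w + s else x v
    with hy
  have hyu : ∀ s, y s u = x u - s := by intro s; simp [hy]
  have hyw : ∀ s, y s w = x w + s := by intro s; simp [hy, huw.symm]
  have hyv : ∀ s v, v ≠ u → v ≠ w → y s v = x v := by
    intro s v h1 h2; simp [hy, h1, h2]
  -- legality of the shift for s ∈ [-x w, x u]
  have hlegal : ∀ s : ℝ, -x w ≤ s → s ≤ x u → IsLegalWeighting (y s) := by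
    intro s h1 h2
    constructor
    · intro v
      by_cases hv : v = u
      · subst hv; rw [hyu]; linarith
      by_cases hv' : v = w
      · subst hv'; rw [hyw]; linarith
      · rw [hyv s v hv hv']; exact hx.1 v
    · have : ∀ v : U, y s v = x v + ((if v = u then -s else 0) + (if v = w then s else 0)) := by
        intro v
        by_cases hv : v = u
        · subst hv; simp [hyu s, huw]; ring
        by_cases hv' : v = w
        · subst hv'; simp [hyw s, hv]
        · simp [hyv s v hv hv', hv, hv']
      rw [Finset.sum_congr rfl fun v _ => this v, Finset.sum_add_distrib,
        Finset.sum_add_distrib, hx.2]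
      simp
  -- linearity of the weight polynomial in s
  set Du : ℝ := ∑ e ∈ H.filter (fun e => u ∈ e), ∏ v ∈ e.erase u, x v with hDu
  set Dw : ℝ := ∑ e ∈ H.filter (fun e => w ∈ e), ∏ v ∈ e.erase w, x v with hDw
  have key : ∀ s : ℝ, weightPoly H (y s) = weightPoly H x + s * (Dw - Du) := by
    intro s
    have hedge : ∀ e ∈ H, ∏ v ∈ e, y s v =
        (∏ v ∈ e, x v) + s * ((if w ∈ e then ∏ v ∈ e.erase w, x v else 0)
          - (if u ∈ e then ∏ v ∈ e.erase u, x v else 0)) := by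
      intro e he
      by_cases hue : u ∈ e
      · have hwe : w ∉ e := fun hwe => hno e he hue hwe
        have h1 : ∏ v ∈ e.erase u, y s v = ∏ v ∈ e.erase u, x v := by
          refine Finset.prod_congr rfl fun v hv => ?_
          exact hyv s v (Finset.ne_of_mem_erase hv)
            (fun h => hwe (h ▸ Finset.mem_of_mem_erase hv))
        rw [← Finset.mul_prod_erase e _ hue, ← Finset.mul_prod_erase e x hue, h1,
          hyu, if_pos hue, if_neg hwe]
        ring
      · by_cases hwe : w ∈ e
        · have h1 : ∏ v ∈ e.erase w, y s v = ∏ v ∈ e.erase w, x v := by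
            refine Finset.prod_congr rfl fun v hv => ?_
            exact hyv s v (fun h => hue (h ▸ Finset.mem_of_mem_erase hv))
              (Finset.ne_of_mem_erase hv)
          rw [← Finset.mul_prod_erase e _ hwe, ← Finset.mul_prod_erase e x hwe, h1,
            hyw, if_pos hwe, if_neg hue]
          ring
        · have h1 : ∏ v ∈ e, y s v = ∏ v ∈ e, x v := by
            refine Finset.prod_congr rfl fun v hv => ?_
            exact hyv s v (fun h => hue (h ▸ hv)) (fun h => hwe (h ▸ hv))
          rw [h1, if_neg hue, if_neg hwe]
          ring
    calc weightPoly H (y s) = ∑ e ∈ H, ((∏ v ∈ e, x v)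
          + s * ((if w ∈ e then ∏ v ∈ e.erase w, x v else 0)
            - (if u ∈ e then ∏ v ∈ e.erase u, x v else 0))) :=
        Finset.sum_congr rfl hedge
      _ = weightPoly H x + s * (Dw - Du) := by
        rw [Finset.sum_add_distrib, ← Finset.mul_sum]
        congr 1
        rw [Finset.sum_sub_distrib, hDu, hDw, Finset.sum_filter, Finset.sum_filter]
  -- the coefficient vanishes
  have hC : Dw - Du = 0 := by
    have h1 := weightPoly_le_lagrangian H (y (x u)) (hlegal (x u) (by linarith) le_rfl)
    have h2 := weightPoly_le_lagrangian H (y (-x w)) (hlegal (-x w) le_rfl (by linarith))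
    rw [key] at h1 h2
    rw [hopt] at h1 h2
    nlinarith
  -- the contradiction
  have hopt' : weightPoly H (y (x u)) = lagrangian H := by
    rw [key, hC, hopt]; ring
  have hsupp : Function.support (y (x u)) = Function.support x \ {u} := by
    ext v
    simp only [Function.mem_support, Set.mem_diff, Set.mem_singleton_iff]
    by_cases hv : v = u
    · subst hv; simp [hyu]
    by_cases hv' : v = w
    · subst hv'; rw [hyw]
      constructor
      · intro _; exact ⟨ne_of_gt hw, hv⟩
      · intro _; positivity
    · rw [hyv _ v hv hv']; tauto
  have hlt : (Function.support (y (x u))).ncard < (Function.support x).ncard := by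
    rw [hsupp]
    exact Set.ncard_diff_singleton_lt_of_mem hu.ne' (Set.toFinite _)
  have := hmin (y (x u)) (hlegal (x u) (by linarith) le_rfl) hopt'
  omega
end

section
/- For every t-uniform hypergraph H and every positive integer v, the Lagrangian of the v-fold tensor power satisfies λ(H^{⊗v}) = λ(H). -/
/-- The `v`-fold tensor power of a hypergraph `H`: vertices are `v`-tuples of vertices
of `H`, and a set of tuples is an edge iff, in every coordinate `ℓ`, the tuples are
pairwise distinct and their `ℓ`-th coordinates form an edge of `H`. -/
def tensorPow {U : Type*} [Fintype U] [DecidableEq U]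
    (H : Finset (Finset U)) (v : ℕ) : Finset (Finset (Fin v → U)) :=
  Finset.univ.filter fun e => ∀ ℓ : Fin v,
    (e.image fun f => f ℓ) ∈ H ∧ ∀ f ∈ e, ∀ g ∈ e, f ℓ = g ℓ → f = g

/-!
Both inequalities come from one monotonicity principle: if `f` maps every edge of `K`
injectively onto an edge of `H`, then pushing a legal weighting of `K` forward along `f`
gives a legal weighting of `H` whose weight polynomial is at least as large, because
expanding `∏_{u ∈ e} (∑_{f w = u} y w)` produces every edge of `K` lying over `e` as one
of its (nonnegative) terms. Projecting onto a coordinate maps edges of `H^{⊗v}` to edges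
of `H`, and the diagonal `u ↦ (u, …, u)` maps edges of `H` to edges of `H^{⊗v}`.
-/

open Finset

section Lagrangian

variable {U W : Type*} [Fintype U] [Fintype W]

lemma IsLegalWeighting.le_one {x : U → ℝ} (hx : IsLegalWeighting x) (u : U) : x u ≤ 1 :=
  hx.2 ▸ single_le_sum (fun u _ => hx.1 u) (mem_univ u)

lemma weightPoly_nonneg (H : Finset (Finset U)) {x : U → ℝ} (hx : ∀ u, 0 ≤ x u) :
    0 ≤ weightPoly H x :=
  sum_nonneg fun _ _ => prod_nonneg fun u _ => hx u

lemma weightPoly_le_card (H : Finset (Finset U)) {x : U → ℝ} (hx : IsLegalWeighting x) :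
    weightPoly H x ≤ #H := by
  calc weightPoly H x ≤ ∑ _e ∈ H, (1 : ℝ) :=
        sum_le_sum fun _ _ => prod_le_one (fun u _ => hx.1 u) fun u _ => hx.le_one u
    _ = #H := by simp

lemma le_lagrangian (H : Finset (Finset U)) {x : U → ℝ} (hx : IsLegalWeighting x) :
    weightPoly H x ≤ lagrangian H :=
  le_csSup ⟨#H, by rintro _ ⟨y, hy, rfl⟩; exact weightPoly_le_card H hy⟩ ⟨x, hx, rfl⟩

lemma lagrangian_nonneg (H : Finset (Finset U)) : 0 ≤ lagrangian H :=
  Real.sSup_nonneg <| by rintro _ ⟨x, hx, rfl⟩; exact weightPoly_nonneg H hx.1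

lemma lagrangian_le_of_forall_exists {H : Finset (Finset U)} {K : Finset (Finset W)}
    (h : ∀ y, IsLegalWeighting y → ∃ x, IsLegalWeighting x ∧ weightPoly K y ≤ weightPoly H x) :
    lagrangian K ≤ lagrangian H := by
  refine Real.sSup_le ?_ (lagrangian_nonneg H)
  rintro _ ⟨y, hy, rfl⟩
  obtain ⟨x, hx, hle⟩ := h y hy
  exact hle.trans (le_lagrangian H hx)

end Lagrangian

section Pushforward

variable {U W : Type*} [Fintype W] [DecidableEq U]

def pushWeighting (f : W → U) (y : W → ℝ) (u : U) : ℝ :=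
  ∑ w with f w = u, y w

lemma IsLegalWeighting.pushWeighting [Fintype U] {y : W → ℝ} (hy : IsLegalWeighting y)
    (f : W → U) :
    IsLegalWeighting (pushWeighting f y) :=
  ⟨fun _ => sum_nonneg fun w _ => hy.1 w, by rw [← hy.2]; exact sum_fiberwise univ f y⟩

/-- Every `E ∈ S` is the image of a section of `f` over `e`, and distinct sections have
distinct images, so the terms of `S` appear among those of the expanded product. -/
lemma sum_prod_le_prod_pushWeighting [DecidableEq W] (f : W → U) {y : W → ℝ}
    (hy : ∀ w, 0 ≤ y w) (e : Finset U) (S : Finset (Finset W))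
    (hS : ∀ E ∈ S, Set.InjOn f E ∧ E.image f = e) :
    ∑ E ∈ S, ∏ w ∈ E, y w ≤ ∏ u ∈ e, pushWeighting f y u := by
  set sections := Fintype.piFinset fun u : e => ({w | f w = u} : Finset W)
  have hsec : ∀ p ∈ sections, ∀ u, f (p u) = u := fun p hp u => by
    simpa using Fintype.mem_piFinset.1 hp u
  have hinj : ∀ p ∈ sections, Function.Injective p := fun p hp u u' huu' =>
    Subtype.ext <| by rw [← hsec p hp u, ← hsec p hp u', huu']
  have hexpand : ∏ u ∈ e, pushWeighting f y u = ∑ E ∈ sections.image (univ.image ·),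
      ∏ w ∈ E, y w := by
    rw [← prod_coe_sort]
    simp only [pushWeighting]
    rw [prod_univ_sum, sum_image]
    · exact sum_congr rfl fun p hp => (prod_image fun _ _ _ _ h => hinj p hp h).symm
    · intro p hp q hq hpq
      replace hpq : univ.image p = univ.image q := hpq
      funext u
      obtain ⟨u', -, hu'⟩ := mem_image.1 (hpq ▸ mem_image_of_mem p (mem_univ u))
      obtain rfl : u' = u := Subtype.ext <| by rw [← hsec q hq u', hu', hsec p hp u]
      exact hu'.symm
  rw [hexpand]
  refine sum_le_sum_of_subset_of_nonneg (fun E hE => ?_) fun _ _ _ => prod_nonneg fun w _ => hy w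
  obtain ⟨hinjE, hEe⟩ := hS E hE
  have hlift : ∀ u : e, ∃ w ∈ E, f w = u := fun u => mem_image.1 (hEe ▸ u.2)
  choose p hpE hpf using hlift
  refine mem_image.2 ⟨p, Fintype.mem_piFinset.2 fun u => by simpa using hpf u, ?_⟩
  refine Subset.antisymm (image_subset_iff.2 fun u _ => hpE u) fun w hw => ?_
  have hfw : f w ∈ e := hEe ▸ mem_image_of_mem f hw
  refine mem_image.2 ⟨⟨f w, hfw⟩, mem_univ _, ?_⟩
  exact hinjE (hpE _) hw (hpf _)

lemma weightPoly_le_weightPoly_pushWeighting [Fintype U] [DecidableEq W] (f : W → U)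
    {H : Finset (Finset U)} {K : Finset (Finset W)}
    (hf : ∀ E ∈ K, Set.InjOn f E ∧ E.image f ∈ H) {y : W → ℝ} (hy : ∀ w, 0 ≤ y w) :
    weightPoly K y ≤ weightPoly H (pushWeighting f y) := by
  rw [weightPoly, ← sum_fiberwise_of_maps_to fun E hE => (hf E hE).2]
  refine sum_le_sum fun e _ => sum_prod_le_prod_pushWeighting f hy e _ fun E hE => ?_
  rw [mem_filter] at hE
  exact ⟨(hf E hE.1).1, hE.2⟩

lemma lagrangian_le_of_injOn_image_mem [Fintype U] (f : W → U)
    {H : Finset (Finset U)} {K : Finset (Finset W)}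
    (hf : ∀ E ∈ K, Set.InjOn f E ∧ E.image f ∈ H) :
    lagrangian K ≤ lagrangian H := by
  classical
  exact lagrangian_le_of_forall_exists fun y hy =>
    ⟨_, hy.pushWeighting f, weightPoly_le_weightPoly_pushWeighting f hf hy.1⟩

end Pushforward

section TensorPow

variable {U : Type*} [Fintype U] [DecidableEq U] {H : Finset (Finset U)} {v : ℕ}

lemma mem_tensorPow {E : Finset (Fin v → U)} :
    E ∈ tensorPow H v ↔ ∀ ℓ : Fin v,
      (E.image fun f => f ℓ) ∈ H ∧ ∀ f ∈ E, ∀ g ∈ E, f ℓ = g ℓ → f = g := by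
  simp [tensorPow]

lemma lagrangian_tensorPow_le (ℓ : Fin v) : lagrangian (tensorPow H v) ≤ lagrangian H :=
  lagrangian_le_of_injOn_image_mem (fun f => f ℓ) fun _ hE =>
    let ⟨hEH, hinj⟩ := mem_tensorPow.1 hE ℓ
    ⟨fun f hf g hg => hinj f hf g hg, hEH⟩

lemma lagrangian_le_lagrangian_tensorPow (ℓ₀ : Fin v) :
    lagrangian H ≤ lagrangian (tensorPow H v) := by
  have hdiag : Function.Injective fun (u : U) (_ : Fin v) => u := fun u u' h => congrFun h ℓ₀
  refine lagrangian_le_of_injOn_image_mem _ fun e he =>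
    ⟨hdiag.injOn, mem_tensorPow.2 fun ℓ => ⟨?_, ?_⟩⟩
  · simpa [image_image, Function.comp_def] using he
  · simp only [mem_image]
    rintro _ ⟨u, -, rfl⟩ _ ⟨u', -, rfl⟩ h
    exact funext fun _ => h

end TensorPow

theorem lagrangian_tensorPow_general {U : Type*} [Fintype U] [DecidableEq U]
    (v : ℕ) (hv : 1 ≤ v)
    (H : Finset (Finset U)) :
    lagrangian (tensorPow H v) = lagrangian H :=
  le_antisymm (lagrangian_tensorPow_le ⟨0, hv⟩) (lagrangian_le_lagrangian_tensorPow ⟨0, hv⟩)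

/-- The Lagrangian of the `v`-fold tensor power of a `t`-uniform hypergraph equals the
Lagrangian of the hypergraph itself. -/
theorem lagrangian_tensorPow {U : Type*} [Fintype U] [DecidableEq U]
    (t v : ℕ) (hv : 1 ≤ v)
    (H : Finset (Finset U)) (hH : ∀ e ∈ H, e.card = t) :
    lagrangian (tensorPow H v) = lagrangian H :=
  lagrangian_tensorPow_general v hv H
end

section
/- Let K ≥ t ≥ 2 be integers and define f(x_1,…,x_K) = ∑_{i=1}^K x_i(1−x_i)^{t−1}. Then the maximum of f over the simplex {x_i ≥ 0, ∑_i x_i = 1} equals (1 − 1/K)^{t−1}, attained at x_i = 1/K for all i. -/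
/-!
The function `g(x) = x (1 - x)^(n+1)` lies below its tangent line at `a` on `(-∞, 1]` as soon as
`0 ≤ a ≤ 1/(n+2)`: by induction on `n`, since multiplying the bound for `n` by `1 - x` undershoots
the tangent line for `n + 1` by `(1 - a)^n (1 - (n+2)a) (x - a)^2 ≥ 0`. Taking `a = 1/K` and
summing the tangent bound over a point of the simplex, the linear terms cancel because `∑ (xᵢ - a) = 0`, leaving `K g(1/K) = (1 - 1/K)^(n+1)`.
-/

open Finset

theorem mul_one_sub_pow_le_tangent {a x : ℝ} (n : ℕ) (ha : 0 ≤ a) (han : (n + 2) * a ≤ 1)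
    (hx : x ≤ 1) :
    x * (1 - x) ^ (n + 1) ≤ a * (1 - a) ^ (n + 1) + (1 - a) ^ n * (1 - (n + 2) * a) * (x - a) := by
  induction n with
  | zero =>
    simp only [CharP.cast_eq_zero, zero_add, pow_one, pow_zero, one_mul]
    nlinarith [sq_nonneg (x - a)]
  | succ n ih =>
    push_cast at han ⊢
    have hna : 0 ≤ (n : ℝ) * a := by positivity
    have ih := ih (by linarith)
    have hstep : a * (1 - a) ^ (n + 2) + (1 - a) ^ (n + 1) * (1 - (n + 1 + 2) * a) * (x - a)
        - (1 - x) * (a * (1 - a) ^ (n + 1) + (1 - a) ^ n * (1 - (n + 2) * a) * (x - a))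
        = (1 - a) ^ n * (1 - (n + 2) * a) * (x - a) ^ 2 := by ring
    have hsq : 0 ≤ (1 - a) ^ n * (1 - (n + 2) * a) * (x - a) ^ 2 :=
      mul_nonneg (mul_nonneg (pow_nonneg (by linarith) n) (by linarith)) (sq_nonneg _)
    calc x * (1 - x) ^ (n + 1 + 1) = (1 - x) * (x * (1 - x) ^ (n + 1)) := by ring
      _ ≤ (1 - x) * (a * (1 - a) ^ (n + 1) + (1 - a) ^ n * (1 - (n + 2) * a) * (x - a)) :=
        mul_le_mul_of_nonneg_left ih (by linarith)
      _ ≤ _ := by linarith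

theorem sum_one_div_card_mul {ι : Type*} [Fintype ι] [Nonempty ι] (y : ℝ) :
    ∑ _i : ι, 1 / (Fintype.card ι : ℝ) * y = y := by
  rw [sum_const, card_univ, nsmul_eq_mul]
  field_simp

theorem sum_mul_one_sub_pow_le {ι : Type*} [Fintype ι] (n : ℕ) (hn : n + 2 ≤ Fintype.card ι)
    (x : ι → ℝ) (hx0 : ∀ i, 0 ≤ x i) (hx1 : ∑ i, x i = 1) :
    ∑ i, x i * (1 - x i) ^ (n + 1) ≤ (1 - 1 / (Fintype.card ι : ℝ)) ^ (n + 1) := by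
  have : Nonempty ι := Fintype.card_pos_iff.mp (by omega)
  have hK : (0 : ℝ) < Fintype.card ι := by positivity
  set a : ℝ := 1 / (Fintype.card ι : ℝ)
  set s : ℝ := (1 - a) ^ n * (1 - (n + 2) * a)
  have han : (n + 2) * a ≤ 1 := by
    rw [← mul_div_assoc, mul_one, div_le_one hK]
    exact_mod_cast hn
  have hxle : ∀ i, x i ≤ 1 := fun i =>
    hx1 ▸ single_le_sum (fun j _ => hx0 j) (mem_univ i)
  have hcard (y : ℝ) : ∑ _i : ι, a * y = y := sum_one_div_card_mul y
  have hdev : ∑ i, (x i - a) = 0 := by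
    have hsum_a := hcard 1
    rw [mul_one] at hsum_a
    rw [sum_sub_distrib, hx1, hsum_a, sub_self]
  calc ∑ i, x i * (1 - x i) ^ (n + 1)
      ≤ ∑ i, (a * (1 - a) ^ (n + 1) + s * (x i - a)) :=
        sum_le_sum fun i _ => mul_one_sub_pow_le_tangent n (by positivity) han (hxle i)
    _ = (1 - a) ^ (n + 1) := by
        rw [sum_add_distrib, ← mul_sum univ (fun i => x i - a) s, hdev, mul_zero, add_zero, hcard]

/-- The maximum of `∑ xᵢ(1-xᵢ)^{t-1}` over the simplex `{xᵢ ≥ 0, ∑ xᵢ = 1}` is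
`(1 - 1/K)^{t-1}`, attained at `xᵢ = 1/K` for all `i`. -/
theorem max_sum_mul_pow (K t : ℕ) (ht : 2 ≤ t) (hK : t ≤ K) :
    IsGreatest
      ((fun x : Fin K → ℝ => ∑ i, x i * (1 - x i) ^ (t - 1)) ''
        {x | (∀ i, 0 ≤ x i) ∧ ∑ i, x i = 1})
      ((1 - 1 / (K : ℝ)) ^ (t - 1)) ∧
    (fun x : Fin K → ℝ => ∑ i, x i * (1 - x i) ^ (t - 1)) (fun _ => 1 / (K : ℝ))
      = (1 - 1 / (K : ℝ)) ^ (t - 1) := by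
  obtain ⟨n, rfl⟩ : ∃ n, t = n + 2 := ⟨t - 2, by omega⟩
  have : NeZero K := ⟨by omega⟩
  have hval : ∑ _i : Fin K, 1 / (K : ℝ) * (1 - 1 / (K : ℝ)) ^ (n + 1)
      = (1 - 1 / (K : ℝ)) ^ (n + 1) := by
    simpa using sum_one_div_card_mul (ι := Fin K) ((1 - 1 / (K : ℝ)) ^ (n + 1))
  refine ⟨⟨⟨fun _ => 1 / (K : ℝ), ⟨fun _ => by positivity, ?_⟩, hval⟩, ?_⟩, hval⟩
  · simp
  · rintro _ ⟨x, ⟨hx0, hx1⟩, rfl⟩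
    simpa using sum_mul_one_sub_pow_le n (by simpa using hK) x hx0 hx1
end

section
/- For integers t, v ≥ 2, the quantity c_{t,v} = ∏_{i=0}^{t−1} (v^t − v^i)/(v^t − 1) satisfies c_{t,v} ≥ 1 − (v+1)/v^2. -/
/-!
With `x = 1/v`, each factor is at least `(v^t - v^i)/v^t = 1 - x^(t-i)`, so `c_{t,v}` dominates
the partial Euler product `∏_{k=1}^{t} (1 - x^k)`. That product is at least `1 - x - x^2`, by an
induction carrying the extra term `x^(n+1)`: multiplying by `1 - x^(n+1)` costs at most
`x^(2n+2) ≤ x^(n+3)` once `n ≥ 1`.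
-/

open Finset

theorem one_sub_sub_add_pow_le_prod_one_sub_pow {x : ℝ} (hx0 : 0 ≤ x) (hx1 : x ≤ 1) {n : ℕ}
    (hn : 1 ≤ n) : 1 - x - x ^ 2 + x ^ (n + 1) ≤ ∏ k ∈ range n, (1 - x ^ (k + 1)) := by
  induction n, hn using Nat.le_induction with
  | base => simp
  | succ n hn ih =>
    have h_factor_nonneg : 0 ≤ 1 - x ^ (n + 1) := sub_nonneg.2 (pow_le_one₀ hx0 hx1)
    have h_square_le : x ^ (2 * n + 2) ≤ x ^ (n + 3) := pow_le_pow_of_le_one hx0 hx1 (by omega)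
    have h_expand : (1 - x - x ^ 2 + x ^ (n + 1)) * (1 - x ^ (n + 1)) =
        1 - x - x ^ 2 + x ^ (n + 1 + 1) + (x ^ (n + 3) - x ^ (2 * n + 2)) := by ring
    rw [prod_range_succ]
    calc 1 - x - x ^ 2 + x ^ (n + 1 + 1)
        ≤ (1 - x - x ^ 2 + x ^ (n + 1)) * (1 - x ^ (n + 1)) := by linarith
      _ ≤ (∏ k ∈ range n, (1 - x ^ (k + 1))) * (1 - x ^ (n + 1)) :=
        mul_le_mul_of_nonneg_right ih h_factor_nonneg

theorem one_sub_sub_le_prod_one_sub_pow {x : ℝ} (hx0 : 0 ≤ x) (hx1 : x ≤ 1) (n : ℕ) :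
    1 - x - x ^ 2 ≤ ∏ k ∈ range n, (1 - x ^ (k + 1)) := by
  rcases Nat.eq_zero_or_pos n with rfl | hn
  · simp only [range_zero, prod_empty]
    linarith [pow_nonneg hx0 2]
  · linarith [one_sub_sub_add_pow_le_prod_one_sub_pow hx0 hx1 hn, pow_nonneg hx0 (n + 1)]

theorem one_sub_inv_pow_sub_le_div {a : ℝ} (ha : 1 < a) {i t : ℕ} (hit : i < t) :
    1 - a⁻¹ ^ (t - i) ≤ (a ^ t - a ^ i) / (a ^ t - 1) := by
  have h_pow_gt_one : 1 < a ^ t := one_lt_pow₀ ha (by omega)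
  have h_num_nonneg : 0 ≤ a ^ t - a ^ i := sub_nonneg.2 (pow_le_pow_right₀ ha.le hit.le)
  rw [inv_pow_sub₀ (by positivity) hit.le, ← div_eq_inv_mul, one_sub_div (by positivity)]
  exact div_le_div_of_nonneg_left h_num_nonneg (by linarith) (by linarith)

theorem c_tv_lower_bound_general (t v : ℕ) (hv : 2 ≤ v) :
    (1 : ℝ) - ((v : ℝ) + 1) / (v : ℝ) ^ 2 ≤
      ∏ i ∈ Finset.range t, ((v : ℝ) ^ t - (v : ℝ) ^ i) / ((v : ℝ) ^ t - 1) := by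
  have hv1 : (1 : ℝ) < v := by exact_mod_cast hv
  set x : ℝ := (v : ℝ)⁻¹
  have hx0 : 0 ≤ x := by positivity
  have hx1 : x ≤ 1 := inv_le_one_of_one_le₀ hv1.le
  calc
    (1 : ℝ) - ((v : ℝ) + 1) / (v : ℝ) ^ 2 = 1 - x - x ^ 2 := by
      simp only [x]
      field_simp
      ring
    _ ≤ ∏ k ∈ range t, (1 - x ^ (k + 1)) := one_sub_sub_le_prod_one_sub_pow hx0 hx1 t
    _ = ∏ i ∈ range t, (1 - x ^ (t - i)) := by
      rw [← prod_range_reflect]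
      refine prod_congr rfl fun i hi => ?_
      have := mem_range.1 hi
      congr 2
      omega
    _ ≤ _ := prod_le_prod (fun i _ => sub_nonneg.2 (pow_le_one₀ hx0 hx1))
      fun i hi => one_sub_inv_pow_sub_le_div hv1 (mem_range.1 hi)

/-- For integers `t, v ≥ 2`, the constant `c_{t,v} = ∏_{i=0}^{t-1} (v^t - v^i)/(v^t - 1)`
satisfies `c_{t,v} ≥ 1 - (v+1)/v²`. -/
theorem c_tv_lower_bound (t v : ℕ) (ht : 2 ≤ t) (hv : 2 ≤ v) :
    (1 : ℝ) - ((v : ℝ) + 1) / (v : ℝ) ^ 2 ≤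
      ∏ i ∈ Finset.range t, ((v : ℝ) ^ t - (v : ℝ) ^ i) / ((v : ℝ) ^ t - 1) :=
  c_tv_lower_bound_general t v hv
end

section
/- Let t, v ≥ 2 with v a prime power, and suppose (v^t − 1)/(v − 1) divides k. Then there is a v^t × k array over an alphabet of v symbols that covers exactly c_{t,v} · k^t / t! of the t-subsets of its columns, where c_{t,v} = ∏_{i=0}^{t−1} (v^t − v^i)/(v^t − 1). In particular cov_max(v^t; t, k, v) ≥ c_{t,v} k^t / t!. -/
open scoped LinearAlgebra.Projectivization
open Finset

/-- An array `A` (rows `R`, columns `Fin k`) over an alphabet `S` covers a set `Q` of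
columns if every assignment of symbols to the columns of `Q` occurs in some row. -/
def Covers {R : Type*} {k : ℕ} {S : Type*} (A : R → Fin k → S) (Q : Finset (Fin k)) : Prop :=
  ∀ f : Fin k → S, ∃ r : R, ∀ j ∈ Q, A r j = f j

private lemma covers_iff_linearIndependent {F : Type*} [Field F] [Fintype F] {v t k : ℕ}
    (σ : F ≃ Fin v) (ρ : Fin (v ^ t) ≃ (Fin t → F)) (φ : Fin k → (Fin t → F))
    {Q : Finset (Fin k)} {u : Fin t → Fin k} (hu : Function.Injective u)
    (hQ : Finset.univ.image u = Q) :
    Covers (fun r j => σ (∑ i, ρ r i * φ j i)) Q ↔ LinearIndependent F (fun i => φ (u i)) := by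
  classical
  have hmem : ∀ i, u i ∈ Q := fun i => hQ ▸ mem_image_of_mem u (mem_univ i)
  set M : Matrix (Fin t) (Fin t) F := Matrix.of (fun i l => φ (u i) l) with hM
  have hrows : (LinearIndependent F fun i => φ (u i)) ↔ Function.Surjective M.mulVec := by
    rw [Matrix.mulVec_surjective_iff_isUnit, ← Matrix.linearIndependent_rows_iff_isUnit]
    exact Iff.rfl
  have hmv : ∀ (y : Fin t → F) (i : Fin t), M.mulVec y i = ∑ l, y l * φ (u i) l := by
    intro y i
    simp only [Matrix.mulVec, dotProduct, hM, Matrix.of_apply]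
    exact Finset.sum_congr rfl fun l _ => mul_comm _ _
  rw [hrows]
  constructor
  · intro hc w
    obtain ⟨r, hr⟩ := hc (fun j => σ (Function.extend u w 0 j))
    refine ⟨ρ r, funext fun i => ?_⟩
    have h1 := hr (u i) (hmem i)
    simp only [hu.extend_apply] at h1
    have h2 := σ.injective h1
    rw [hmv, h2]
  · intro hs f
    obtain ⟨y, hy⟩ := hs (fun i => σ.symm (f (u i)))
    refine ⟨ρ.symm y, fun j hj => ?_⟩
    rw [← hQ] at hj
    obtain ⟨i, -, rfl⟩ := mem_image.1 hj
    have h1 : M.mulVec y i = σ.symm (f (u i)) := congrFun hy i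
    rw [hmv] at h1
    simp only [Equiv.apply_symm_apply]
    rw [h1, Equiv.apply_symm_apply]

private theorem main_aux (t v k : ℕ) (ht : 2 ≤ t) (hv2 : 2 ≤ v)
    (F : Type) [Field F] [Fintype F] (hF : Fintype.card F = v)
    (hdvd : ((v ^ t - 1) / (v - 1)) ∣ k) :
    ∃ A : Fin (v ^ t) → Fin k → Fin v,
      ({Q : Finset (Fin k) | Q.card = t ∧ Covers A Q}.ncard : ℝ)
        = (∏ i ∈ Finset.range t, ((v : ℝ) ^ t - (v : ℝ) ^ i) / ((v : ℝ) ^ t - 1)) *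
            (k : ℝ) ^ t / (Nat.factorial t : ℝ) := by
  classical
  obtain ⟨n, hkn⟩ := hdvd
  have hdvd1 : (v - 1) ∣ (v ^ t - 1) := by
    simpa using Nat.sub_dvd_pow_sub_pow v 1 t
  have hmdiv : (v ^ t - 1) / (v - 1) * (v - 1) = v ^ t - 1 := Nat.div_mul_cancel hdvd1
  have hv1 : v - 1 ≠ 0 := by omega
  have ht0 : t ≠ 0 := by omega
  have hv1le : 1 ≤ v := by omega
  have hvle : ∀ i, i < t → v ^ i ≤ v ^ t := fun i hi => Nat.pow_le_pow_right (by omega) hi.le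
  have hvt1 : 1 ≤ v ^ t := Nat.one_le_pow t v (by omega)
  have hvt2 : 1 < v ^ t := Nat.one_lt_pow (by omega) hv2
  have hcardV : Fintype.card (Fin t → F) = v ^ t := by
    rw [Fintype.card_fun, hF, Fintype.card_fin]
  have hcardU : Fintype.card Fˣ = v - 1 := by rw [Fintype.card_units, hF]
  letI : Finite (ℙ F (Fin t → F)) := Quotient.finite _
  letI : Fintype (ℙ F (Fin t → F)) := Fintype.ofFinite _
  have hrepmk : ∀ (w : Fin t → F) (hw : w ≠ 0), ∃ a : Fˣ,
      a • w = (Projectivization.mk F w hw).rep := fun w hw =>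
    (Projectivization.mk_eq_mk_iff F _ _ (Projectivization.rep_nonzero _) hw).1
      (Projectivization.mk_rep _)
  have hmk_eq : ∀ (P P' : ℙ F (Fin t → F)) (c c' : Fˣ),
      (c : F) • P.rep = (c' : F) • P'.rep → P = P' := by
    intro P P' c c' h1
    rw [← Projectivization.mk_rep P, ← Projectivization.mk_rep P']
    refine (Projectivization.mk_eq_mk_iff F _ _ _ _).2 ⟨c⁻¹ * c', ?_⟩
    rw [Units.smul_def, Units.val_mul, mul_smul, ← h1]
    rw [Units.val_inv_eq_inv_val, inv_smul_smul₀ (Units.ne_zero c)]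
  -- cardinality of the projectivization
  have cardNe : Nat.card {w : Fin t → F // w ≠ 0} = v ^ t - 1 := by
    rw [Nat.card_eq_fintype_card]
    have h := Fintype.card_subtype_compl (fun w : Fin t → F => w = 0)
    rw [Fintype.card_subtype_eq (0 : Fin t → F), hcardV] at h
    exact h
  have E2 : Nat.card (Fˣ × ℙ F (Fin t → F)) = Nat.card {w : Fin t → F // w ≠ 0} := by
    apply Nat.card_congr
    refine Equiv.ofBijective (fun cP => ⟨(cP.1 : F) • cP.2.rep,
      smul_ne_zero (Units.ne_zero _) (Projectivization.rep_nonzero _)⟩) ⟨?_, ?_⟩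
    · rintro ⟨c, P⟩ ⟨c', P'⟩ hcc
      have h1 : (c : F) • P.rep = (c' : F) • P'.rep := congrArg Subtype.val hcc
      obtain rfl : P = P' := hmk_eq P P' c c' h1
      have h2 : (c : F) = (c' : F) :=
        smul_left_injective F (Projectivization.rep_nonzero P) h1
      simp [Units.ext h2]
    · rintro ⟨w, hw⟩
      obtain ⟨a, ha⟩ := hrepmk w hw
      refine ⟨(a⁻¹, Projectivization.mk F w hw), Subtype.ext ?_⟩
      show ((a⁻¹ : Fˣ) : F) • (Projectivization.mk F w hw).rep = w
      rw [← ha, Units.smul_def, Units.val_inv_eq_inv_val,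
        inv_smul_smul₀ (Units.ne_zero a)]
  have hcardP : (v - 1) * Nat.card (ℙ F (Fin t → F)) = v ^ t - 1 := by
    rw [← cardNe, ← E2, Nat.card_prod, Nat.card_eq_fintype_card (α := Fˣ), hcardU]
  have hP : Nat.card (ℙ F (Fin t → F)) = (v ^ t - 1) / (v - 1) := by
    have h2 : (v - 1) * ((v ^ t - 1) / (v - 1)) = v ^ t - 1 := by
      rw [mul_comm]; exact hmdiv
    refine Nat.eq_of_mul_eq_mul_left (show 0 < v - 1 by omega) ?_
    rw [hcardP, h2]
  have hcards : Fintype.card (Fin k) = Fintype.card (ℙ F (Fin t → F) × Fin n) := by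
    rw [Fintype.card_fin, Fintype.card_prod, Fintype.card_fin,
      ← Nat.card_eq_fintype_card, hP, hkn]
  let e : Fin k ≃ (ℙ F (Fin t → F) × Fin n) := Fintype.equivOfCardEq hcards
  let φ : Fin k → (Fin t → F) := fun j => ((e j).1).rep
  let σ : F ≃ Fin v := Fintype.equivFinOfCardEq hF
  let ρ : Fin (v ^ t) ≃ (Fin t → F) := (Fintype.equivFinOfCardEq hcardV).symm
  refine ⟨fun r j => σ (∑ i, ρ r i * φ j i), ?_⟩
  set A : Fin (v ^ t) → Fin k → Fin v := fun r j => σ (∑ i, ρ r i * φ j i) with hA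
  set Cset : Set (Finset (Fin k)) := {Q | Q.card = t ∧ Covers A Q} with hCset
  -- helper facts about enumerations of a `t`-set
  have imageo : ∀ (Q : Finset (Fin k)) (hQc : Q.card = t),
      Finset.univ.image (fun i => ((Q.orderIsoOfFin hQc i) : Fin k)) = Q := by
    intro Q hQc
    refine Finset.ext fun j => ?_
    simp only [Finset.mem_image, Finset.mem_univ, true_and]
    constructor
    · rintro ⟨i, rfl⟩; exact (Q.orderIsoOfFin hQc i).2
    · intro hj; exact ⟨(Q.orderIsoOfFin hQc).symm ⟨j, hj⟩, by simp⟩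
  have oinj : ∀ (Q : Finset (Fin k)) (hQc : Q.card = t),
      Function.Injective (fun i => ((Q.orderIsoOfFin hQc i) : Fin k)) :=
    fun Q hQc => Subtype.val_injective.comp (Q.orderIsoOfFin hQc).injective
  have himgperm : ∀ (u : Fin t → Fin k) (π : Equiv.Perm (Fin t)),
      Finset.univ.image (fun i => u (π i)) = Finset.univ.image u := by
    intro u π; ext j
    simp only [Finset.mem_image, Finset.mem_univ, true_and]
    exact ⟨fun ⟨i, h⟩ => ⟨π i, h⟩, fun ⟨i, h⟩ => ⟨π.symm i, by simpa using h⟩⟩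
  -- Step 1 : covered sets vs ordered independent tuples of columns
  have hDC : Nat.card {g : Fin t → Fin k // LinearIndependent F (fun i => φ (g i))}
      = Cset.ncard * t.factorial := by
    let Φ : {Q : Finset (Fin k) // Q ∈ Cset} × Equiv.Perm (Fin t) →
        {g : Fin t → Fin k // LinearIndependent F (fun i => φ (g i))} :=
      fun x => ⟨fun i => ((x.1.1.orderIsoOfFin x.1.2.1 (x.2 i)) : Fin k), by
        obtain ⟨⟨Q, hQc, hQcov⟩, π⟩ := x
        have h1 : LinearIndependent F (fun i => φ ((Q.orderIsoOfFin hQc i : Fin k))) :=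
          (covers_iff_linearIndependent σ ρ φ (oinj Q hQc) (imageo Q hQc)).1 hQcov
        exact h1.comp π π.injective⟩
    have hbij : Function.Bijective Φ := by
      constructor
      · rintro ⟨⟨Q, hQ⟩, π⟩ ⟨⟨Q', hQ'⟩, π'⟩ h
        have hfun : ∀ i, ((Q.orderIsoOfFin hQ.1 (π i)) : Fin k)
            = ((Q'.orderIsoOfFin hQ'.1 (π' i)) : Fin k) :=
          fun i => congrFun (congrArg Subtype.val h) i
        obtain rfl : Q = Q' := by
          have h1 : Finset.univ.image (fun i => ((Q.orderIsoOfFin hQ.1 (π i)) : Fin k)) = Q :=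
            (himgperm (fun i => ((Q.orderIsoOfFin hQ.1 i) : Fin k)) π).trans (imageo Q hQ.1)
          have h2 : Finset.univ.image (fun i => ((Q'.orderIsoOfFin hQ'.1 (π' i)) : Fin k)) = Q' :=
            (himgperm (fun i => ((Q'.orderIsoOfFin hQ'.1 i) : Fin k)) π').trans (imageo Q' hQ'.1)
          rw [← h1, ← h2]
          exact Finset.image_congr fun i _ => hfun i
        have hππ : π = π' := Equiv.ext fun i => oinj Q hQ.1 (hfun i)
        simp [hππ]
      · rintro ⟨g, hg⟩
        have hginj : Function.Injective g := by
          intro a b hab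
          exact hg.injective (by rw [hab] : φ (g a) = φ (g b))
        have hQc : (Finset.univ.image g).card = t := by
          rw [Finset.card_image_of_injective _ hginj, Finset.card_univ, Fintype.card_fin]
        have hcov : Covers A (Finset.univ.image g) :=
          (covers_iff_linearIndependent σ ρ φ hginj rfl).2 hg
        set Q : Finset (Fin k) := Finset.univ.image g with hQdef
        have hmemQ : ∀ i, g i ∈ Q := fun i => Finset.mem_image_of_mem g (Finset.mem_univ i)
        have hπ0inj : Function.Injective
            (fun i => (Q.orderIsoOfFin hQc).symm ⟨g i, hmemQ i⟩) := by
          intro a b hab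
          have := congrArg (Q.orderIsoOfFin hQc) hab
          simp only [OrderIso.apply_symm_apply, Subtype.mk.injEq] at this
          exact hginj this
        let π : Equiv.Perm (Fin t) :=
          Equiv.ofBijective _ (Finite.injective_iff_bijective.1 hπ0inj)
        refine ⟨⟨⟨Q, hQc, hcov⟩, π⟩, Subtype.ext (funext fun i => ?_)⟩
        show ((Q.orderIsoOfFin hQc ((Q.orderIsoOfFin hQc).symm ⟨g i, hmemQ i⟩)) : Fin k) = g i
        rw [OrderIso.apply_symm_apply]
    have hc0 := Nat.card_congr (Equiv.ofBijective Φ hbij)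
    have hc1 : Nat.card {Q : Finset (Fin k) // Q ∈ Cset} = Cset.ncard :=
      Nat.card_coe_set_eq Cset
    rw [← hc0, Nat.card_prod, hc1, Nat.card_eq_fintype_card, Fintype.card_perm,
      Fintype.card_fin]
  -- Step 2 : ordered independent column tuples vs independent line tuples with multiplicities
  have hDT : Nat.card {g : Fin t → Fin k // LinearIndependent F (fun i => φ (g i))}
      = Nat.card {z : Fin t → ℙ F (Fin t → F) //
          LinearIndependent F (fun i => (z i).rep)} * n ^ t := by
    let Ψ : {z : Fin t → ℙ F (Fin t → F) // LinearIndependent F (fun i => (z i).rep)}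
        × (Fin t → Fin n) → {g : Fin t → Fin k // LinearIndependent F (fun i => φ (g i))} :=
      fun x => ⟨fun i => e.symm (x.1.1 i, x.2 i), by
        have hφ : (fun i => φ (e.symm (x.1.1 i, x.2 i))) = fun i => (x.1.1 i).rep :=
          funext fun i => by simp only [φ, Equiv.apply_symm_apply]
        rw [hφ]; exact x.1.2⟩
    have hbij : Function.Bijective Ψ := by
      constructor
      · rintro ⟨⟨z, hz⟩, s⟩ ⟨⟨z', hz'⟩, s'⟩ h
        have hfun : ∀ i, e.symm (z i, s i) = e.symm (z' i, s' i) :=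
          fun i => congrFun (congrArg Subtype.val h) i
        have hpair : ∀ i, (z i, s i) = (z' i, s' i) := fun i => e.symm.injective (hfun i)
        have hz'' : z = z' := funext fun i => congrArg Prod.fst (hpair i)
        have hs'' : s = s' := funext fun i => congrArg Prod.snd (hpair i)
        subst hz''; subst hs''; rfl
      · rintro ⟨g, hg⟩
        refine ⟨⟨⟨fun i => (e (g i)).1, ?_⟩, fun i => (e (g i)).2⟩,
          Subtype.ext (funext fun i => ?_)⟩
        · exact hg
        · show e.symm ((e (g i)).1, (e (g i)).2) = g i
          rw [Prod.mk.eta, Equiv.symm_apply_apply]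
    rw [Nat.card_congr (Equiv.ofBijective Ψ hbij).symm, Nat.card_prod,
      Nat.card_eq_fintype_card (α := Fin t → Fin n), Fintype.card_fun,
      Fintype.card_fin, Fintype.card_fin]
  -- Step 3 : counting independent tuples of projective representatives
  have hBT : (v - 1) ^ t * Nat.card {z : Fin t → ℙ F (Fin t → F) //
          LinearIndependent F (fun i => (z i).rep)}
      = ∏ i ∈ Finset.range t, (v ^ t - v ^ i) := by
    have hfr : Module.finrank F (Fin t → F) = t := Module.finrank_fin_fun F
    have hB := card_linearIndependent (K := F) (V := Fin t → F) (k := t) (le_of_eq hfr.symm)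
    rw [hfr, hF] at hB
    let ΨB : (Fin t → Fˣ) × {z : Fin t → ℙ F (Fin t → F) //
          LinearIndependent F (fun i => (z i).rep)}
        → {s : Fin t → (Fin t → F) // LinearIndependent F s} :=
      fun x => ⟨fun i => (x.1 i : F) • (x.2.1 i).rep, by
        have := x.2.2.units_smul x.1
        have hfe : (x.1 • fun i => (x.2.1 i).rep) = fun i => (x.1 i : F) • (x.2.1 i).rep :=
          funext fun i => rfl
        rwa [hfe] at this⟩
    have hbij : Function.Bijective ΨB := by
      constructor
      · rintro ⟨c, z, hz⟩ ⟨c', z', hz'⟩ h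
        have hfun : ∀ i, (c i : F) • (z i).rep = (c' i : F) • (z' i).rep :=
          fun i => congrFun (congrArg Subtype.val h) i
        have hzz : z = z' := funext fun i => hmk_eq _ _ _ _ (hfun i)
        subst hzz
        have hcc : c = c' := funext fun i => Units.ext
          (smul_left_injective F (Projectivization.rep_nonzero (z i)) (hfun i))
        subst hcc; rfl
      · rintro ⟨b, hb⟩
        have hbne : ∀ i, b i ≠ 0 := fun i => hb.ne_zero i
        choose a ha using fun i => hrepmk (b i) (hbne i)
        refine ⟨⟨fun i => (a i)⁻¹, ⟨fun i => Projectivization.mk F (b i) (hbne i), ?_⟩⟩,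
          Subtype.ext (funext fun i => ?_)⟩
        · have hfe : (fun i => (Projectivization.mk F (b i) (hbne i)).rep)
              = (a • b) := funext fun i => (ha i).symm
          rw [hfe]
          exact hb.units_smul a
        · show ((a i)⁻¹ : Fˣ) • (Projectivization.mk F (b i) (hbne i)).rep = b i
          rw [← ha i, inv_smul_smul]
    have h0 := Nat.card_congr (Equiv.ofBijective ΨB hbij)
    rw [Nat.card_prod, Nat.card_eq_fintype_card (α := Fin t → Fˣ), Fintype.card_fun,
      hcardU, Fintype.card_fin, hB] at h0
    rw [h0]
    exact Fin.prod_univ_eq_prod_range (fun i => v ^ t - v ^ i) t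
  -- final arithmetic
  set ncT : ℕ := Nat.card {z : Fin t → ℙ F (Fin t → F) //
      LinearIndependent F (fun i => (z i).rep)} with hncT
  clear_value ncT
  have hnat : Cset.ncard * t.factorial = ncT * n ^ t := by rw [← hDC, hDT]
  have e1 : (Cset.ncard : ℝ) * (t.factorial : ℝ) = (ncT : ℝ) * (n : ℝ) ^ t := by
    exact_mod_cast hnat
  have hprodcast : ((∏ i ∈ Finset.range t, (v ^ t - v ^ i) : ℕ) : ℝ)
      = ∏ i ∈ Finset.range t, ((v : ℝ) ^ t - (v : ℝ) ^ i) := by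
    rw [Nat.cast_prod]
    refine Finset.prod_congr rfl fun i hi => ?_
    rw [Nat.cast_sub (hvle i (Finset.mem_range.1 hi)),
      Nat.cast_pow, Nat.cast_pow]
  have e2 : (ncT : ℝ) * ((v : ℝ) - 1) ^ t
      = ∏ i ∈ Finset.range t, ((v : ℝ) ^ t - (v : ℝ) ^ i) := by
    have hcast := congrArg (fun x : ℕ => (x : ℝ)) hBT
    simp only [Nat.cast_mul, Nat.cast_pow, Nat.cast_sub hv1le, Nat.cast_one] at hcast
    rw [← hprodcast, ← hcast]; ring
  have e3 : (((v ^ t - 1) / (v - 1) : ℕ) : ℝ) * (n : ℝ) = (k : ℝ) := by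
    exact_mod_cast hkn.symm
  have e4 : (((v ^ t - 1) / (v - 1) : ℕ) : ℝ) * ((v : ℝ) - 1) = (v : ℝ) ^ t - 1 := by
    have hcast := congrArg (fun x : ℕ => (x : ℝ)) hmdiv
    simp only [Nat.cast_mul, Nat.cast_sub hv1le, Nat.cast_sub hvt1,
      Nat.cast_one, Nat.cast_pow] at hcast
    exact hcast
  have hfacne : ((t.factorial : ℕ) : ℝ) ≠ 0 := Nat.cast_ne_zero.2 t.factorial_ne_zero
  have hne1 : ((v : ℝ) ^ t - 1) ≠ 0 := by
    have h2 : (1 : ℝ) < ((v ^ t : ℕ) : ℝ) := by exact_mod_cast hvt2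
    rw [Nat.cast_pow] at h2
    linarith
  have h5 : ((v : ℝ) ^ t - 1) ^ t
      = (((v ^ t - 1) / (v - 1) : ℕ) : ℝ) ^ t * ((v : ℝ) - 1) ^ t := by
    rw [← e4, mul_pow]
  have h6 : (k : ℝ) ^ t = (((v ^ t - 1) / (v - 1) : ℕ) : ℝ) ^ t * (n : ℝ) ^ t := by
    rw [← e3, mul_pow]
  have key : (Cset.ncard : ℝ) * (((v : ℝ) ^ t - 1) ^ t * (t.factorial : ℝ))
      = (∏ i ∈ Finset.range t, ((v : ℝ) ^ t - (v : ℝ) ^ i)) * (k : ℝ) ^ t := by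
    rw [h5, h6]
    linear_combination ((((v ^ t - 1) / (v - 1) : ℕ) : ℝ) ^ t * ((v : ℝ) - 1) ^ t) * e1
      + ((((v ^ t - 1) / (v - 1) : ℕ) : ℝ) ^ t * (n : ℝ) ^ t) * e2
  rw [Finset.prod_div_distrib, Finset.prod_const, Finset.card_range,
    div_mul_eq_mul_div, div_div, eq_div_iff (mul_ne_zero (pow_ne_zero _ hne1) hfacne)]
  exact key

/-- For a prime power `v` and `(v^t-1)/(v-1) ∣ k`, there is a `v^t × k` array over `v`
symbols covering exactly `c_{t,v} · k^t / t!` of the `t`-subsets of its columns, where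
`c_{t,v} = ∏_{i=0}^{t-1} (v^t - v^i)/(v^t - 1)`. -/
theorem exists_array_covering_exactly (t v k : ℕ) (ht : 2 ≤ t) (hv : IsPrimePow v)
    (hdvd : ((v ^ t - 1) / (v - 1)) ∣ k) :
    ∃ A : Fin (v ^ t) → Fin k → Fin v,
      ({Q : Finset (Fin k) | Q.card = t ∧ Covers A Q}.ncard : ℝ)
        = (∏ i ∈ Finset.range t, ((v : ℝ) ^ t - (v : ℝ) ^ i) / ((v : ℝ) ^ t - 1)) *
            (k : ℝ) ^ t / (Nat.factorial t : ℝ) := by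
  have hv2 : 2 ≤ v := hv.two_le
  obtain ⟨p, m, hp, hm, rfl⟩ := hv
  haveI : Fact p.Prime := ⟨hp.nat_prime⟩
  letI : Fintype (GaloisField p m) := Fintype.ofFinite _
  have hF : Fintype.card (GaloisField p m) = p ^ m := by
    rw [← Nat.card_eq_fintype_card]
    exact GaloisField.card p m hm.ne'
  exact main_aux t (p ^ m) k ht hv2 (GaloisField p m) hF hdvd
end

section
/- Let H_{t,v} be the t-uniform hypergraph whose vertices are vectors in [v]^{v^t} and whose edges are the t-sets {y_1,…,y_t} such that every vector in [v]^t appears as a row of the v^t × t matrix with columns y_1,…,y_t. Then there exists an optimal weighting of H_{t,v} whose support has size at most (v^t − 1)/(v − 1). -/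
open Classical in
/-- The hypergraph `H_{t,v}`: vertices are vectors in `[v]^{v^t}` and edges are the
`t`-sets `{y₁,…,y_t}` such that every vector in `[v]^t` appears as a row of the
`v^t × t` matrix with columns `y₁,…,y_t`. -/
noncomputable def Htv (t v : ℕ) : Finset (Finset (Fin (v ^ t) → Fin v)) :=
  Finset.univ.filter fun e => e.card = t ∧
    ∀ g : (Fin (v ^ t) → Fin v) → Fin v, ∃ r : Fin (v ^ t), ∀ y ∈ e, y r = g y

/-!
Take an optimal weighting `x` of smallest support. If two vertices `u ≠ w` of positive weight
lay in no common edge, the weight polynomial would be affine along the segment that moves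
weight from `w` to `u`; being maximal at an interior point, it would be constant there, and
moving all of the weight of `w` onto `u` would give an optimal weighting of smaller support.
So any two vertices of the support lie in a common edge, and as two columns of the
`v^t × t` matrix of that edge every pair of symbols occurs in the same number of rows.
Pick functions `χ₁, …, χ_{v-1}` on `[v]` that are orthonormal and orthogonal to the
constants. Balancedness makes the vectors `χᵢ ∘ y`, for `y` in the support, orthogonal to
each other and to the constant vector of `ℝ^{v^t}`, whence
`|supp x| (v - 1) + 1 ≤ v^t` (Rao's bound for orthogonal arrays of strength 2).
-/

open Finset

section Lagrangian

variable {U : Type*} [Fintype U] (H : Finset (Finset U))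

def IsOptimalWeighting (x : U → ℝ) : Prop :=
  IsLegalWeighting x ∧ weightPoly H x = lagrangian H

theorem continuous_weightPoly : Continuous (weightPoly H) := by
  unfold weightPoly
  fun_prop

theorem isCompact_weightPoly_image_stdSimplex : IsCompact (weightPoly H '' stdSimplex ℝ U) :=
  (isCompact_stdSimplex ℝ U).image (continuous_weightPoly H)

theorem weightPoly_le_lagrangian_s11 {x : U → ℝ} (hx : IsLegalWeighting x) :
    weightPoly H x ≤ lagrangian H :=
  le_csSup (isCompact_weightPoly_image_stdSimplex H).bddAbove ⟨x, hx, rfl⟩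

theorem exists_isOptimalWeighting [Nonempty U] : ∃ x, IsOptimalWeighting H x := by
  classical
  exact (isCompact_weightPoly_image_stdSimplex H).sSup_mem
    ⟨_, _, single_mem_stdSimplex ℝ (Classical.arbitrary U), rfl⟩

end Lagrangian

section ShiftWeight

variable {U : Type*} [DecidableEq U]

def shiftWeight (u w : U) (s : ℝ) (x : U → ℝ) : U → ℝ :=
  x + s • (Pi.single u 1 - Pi.single w 1)

theorem shiftWeight_apply (u w : U) (s : ℝ) (x : U → ℝ) (z : U) :
    shiftWeight u w s x z = x z + s * ((if z = u then 1 else 0) - if z = w then 1 else 0) := by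
  simp [shiftWeight, Pi.single_apply]

theorem shiftWeight_comm (u w : U) (s : ℝ) (x : U → ℝ) :
    shiftWeight u w s x = shiftWeight w u (-s) x := by
  ext z
  simp only [shiftWeight_apply]
  ring

theorem IsLegalWeighting.shiftWeight [Fintype U] {x : U → ℝ} (hx : IsLegalWeighting x)
    (u w : U) {s : ℝ} (hu : -x u ≤ s) (hw : s ≤ x w) :
    IsLegalWeighting (shiftWeight u w s x) := by
  refine ⟨fun z => ?_, ?_⟩
  · rw [shiftWeight_apply]
    have := hx.1 z
    split_ifs with h₁ h₂ <;> subst_vars <;> linarith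
  · simp [_root_.shiftWeight, sum_add_distrib, ← mul_sum, sum_sub_distrib, hx.2]

theorem support_shiftWeight_subset {x : U → ℝ} {u w : U} (hu : x u ≠ 0)
    (huw : u ≠ w) : Function.support (shiftWeight u w (x w) x) ⊆ Function.support x \ {w} := by
  intro z hz
  rw [Function.mem_support, shiftWeight_apply] at hz
  rcases eq_or_ne z w with rfl | hzw
  · simp [huw.symm] at hz
  refine ⟨?_, hzw⟩
  rcases eq_or_ne z u with rfl | hzu
  · exact hu
  · simpa [hzu, hzw] using hz

theorem prod_shiftWeight_of_notMem {e : Finset U} {u w : U} (hu : u ∉ e) (hw : w ∉ e) (s : ℝ)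
    (x : U → ℝ) : ∏ y ∈ e, shiftWeight u w s x y = ∏ y ∈ e, x y :=
  prod_congr rfl fun y hy => by
    rw [shiftWeight_apply, if_neg (ne_of_mem_of_not_mem hy hu), if_neg (ne_of_mem_of_not_mem hy hw)]
    ring

theorem prod_shiftWeight_of_mem {e : Finset U} {u w : U} (hu : u ∈ e) (hw : w ∉ e) (s : ℝ)
    (x : U → ℝ) :
    ∏ y ∈ e, shiftWeight u w s x y = ∏ y ∈ e, x y + s * ∏ y ∈ e.erase u, x y := by
  rw [← mul_prod_erase e _ hu, ← mul_prod_erase e x hu,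
    prod_shiftWeight_of_notMem (notMem_erase u e) (fun h => hw (mem_of_mem_erase h)),
    shiftWeight_apply, if_pos rfl, if_neg (ne_of_mem_of_not_mem hu hw)]
  ring

theorem exists_weightPoly_shiftWeight_eq [Fintype U] {H : Finset (Finset U)} {u w : U}
    (huw : ∀ e ∈ H, ¬(u ∈ e ∧ w ∈ e)) (x : U → ℝ) :
    ∃ c, ∀ s, weightPoly H (shiftWeight u w s x) = weightPoly H x + s * c := by
  refine ⟨∑ e ∈ H, ((if u ∈ e then ∏ y ∈ e.erase u, x y else 0) -
    if w ∈ e then ∏ y ∈ e.erase w, x y else 0), fun s => ?_⟩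
  rw [weightPoly, weightPoly, mul_sum, ← sum_add_distrib]
  refine sum_congr rfl fun e he => ?_
  by_cases hu : u ∈ e
  · have hw : w ∉ e := fun hw => huw e he ⟨hu, hw⟩
    rw [prod_shiftWeight_of_mem hu hw, if_pos hu, if_neg hw]
    ring
  by_cases hw : w ∈ e
  · rw [shiftWeight_comm, prod_shiftWeight_of_mem hw hu, if_neg hu, if_pos hw]
    ring
  · rw [prod_shiftWeight_of_notMem hu hw, if_neg hu, if_neg hw]
    ring

end ShiftWeight

section MinimalSupport

variable {U : Type*} [Fintype U] {H : Finset (Finset U)}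

theorem IsOptimalWeighting.exists_ncard_support_lt [DecidableEq U] {x : U → ℝ}
    (hx : IsOptimalWeighting H x) {u w : U} (hu : x u ≠ 0) (hw : x w ≠ 0) (huw : u ≠ w)
    (hno : ∀ e ∈ H, ¬(u ∈ e ∧ w ∈ e)) :
    ∃ y, IsOptimalWeighting H y ∧ (Function.support y).ncard < (Function.support x).ncard := by
  obtain ⟨c, hc⟩ := exists_weightPoly_shiftWeight_eq hno x
  have hxu : 0 < x u := (hx.1.1 u).lt_of_ne' hu
  have hxw : 0 < x w := (hx.1.1 w).lt_of_ne' hw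
  have hmove := hx.1.shiftWeight u w (s := x w) (by linarith) le_rfl
  have hback := hx.1.shiftWeight u w (s := -x u) le_rfl (by linarith)
  have h₁ := weightPoly_le_lagrangian_s11 H hmove
  have h₂ := weightPoly_le_lagrangian_s11 H hback
  rw [hc, hx.2] at h₁ h₂
  have hc0 : c = 0 := by nlinarith
  refine ⟨_, ⟨hmove, by rw [hc, hc0, mul_zero, add_zero, hx.2]⟩, ?_⟩
  calc (Function.support (shiftWeight u w (x w) x)).ncard
      ≤ (Function.support x \ {w}).ncard :=
        Set.ncard_le_ncard (support_shiftWeight_subset hu huw)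
    _ < (Function.support x).ncard := Set.ncard_sdiff_singleton_lt_of_mem hw

theorem exists_isOptimalWeighting_pairwise_mem_edge [Nonempty U] (H : Finset (Finset U)) :
    ∃ x, IsOptimalWeighting H x ∧
      (Function.support x).Pairwise fun u w => ∃ e ∈ H, u ∈ e ∧ w ∈ e := by
  classical
  obtain ⟨x, hx⟩ := exists_isOptimalWeighting H
  induction h : (Function.support x).ncard using Nat.strong_induction_on generalizing x with
  | _ n ih =>
    by_cases hcov : (Function.support x).Pairwise fun u w => ∃ e ∈ H, u ∈ e ∧ w ∈ e
    · exact ⟨x, hx, hcov⟩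
    obtain ⟨u, hu, w, hw, huw, hno⟩ :
        ∃ u ∈ Function.support x, ∃ w ∈ Function.support x,
          u ≠ w ∧ ∀ e ∈ H, ¬(u ∈ e ∧ w ∈ e) := by
      simpa [Set.Pairwise] using hcov
    obtain ⟨y, hy, hlt⟩ := hx.exists_ncard_support_lt hu hw huw hno
    exact ih _ (h ▸ hlt) y hy rfl

end MinimalSupport

section BalancedPair

variable {R α : Type*} [Fintype R] [DecidableEq α]

/-- `y` and `z` are two columns of an orthogonal array of strength 2 and index `n`. -/
def IsBalancedPair (y z : R → α) (n : ℕ) : Prop :=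
  ∀ a b, #{r | y r = a ∧ z r = b} = n

theorem IsBalancedPair.sum_eq [Fintype α] {M : Type*} [AddCommMonoid M] {y z : R → α} {n : ℕ}
    (h : IsBalancedPair y z n) (f : α → α → M) :
    ∑ r, f (y r) (z r) = n • ∑ a, ∑ b, f a b := by
  rw [← Fintype.sum_prod_type', smul_sum,
    ← sum_fiberwise' univ (fun r => (y r, z r)) fun p => f p.1 p.2]
  refine sum_congr rfl fun p _ => ?_
  rw [sum_const, ← h p.1 p.2]
  congr 2
  ext r
  simp [Prod.ext_iff]

theorem IsBalancedPair.sum_comp_left [Fintype α] {y z : R → α} {n : ℕ}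
    (h : IsBalancedPair y z n) (f : α → ℝ) :
    ∑ r, f (y r) = (n * Fintype.card α) * ∑ a, f a := by
  simp [h.sum_eq fun a _ => f a, mul_sum, mul_assoc]

theorem IsBalancedPair.exists_sum_comp_left [Fintype α] [Nonempty R] {y z : R → α} {n : ℕ}
    (h : IsBalancedPair y z n) :
    ∃ m : ℝ, m ≠ 0 ∧ ∀ f : α → ℝ, ∑ r, f (y r) = m * ∑ a, f a := by
  refine ⟨_, fun h0 => ?_, h.sum_comp_left⟩
  simpa [h0] using h.sum_comp_left fun _ => 1

theorem IsBalancedPair.comp_bijective {R' : Type*} [Fintype R'] {y z : R → α} {n : ℕ}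
    (h : IsBalancedPair y z n) {ρ : R' → R} (hρ : Function.Bijective ρ) :
    IsBalancedPair (y ∘ ρ) (z ∘ ρ) n := fun a b => by
  rw [← h a b]
  exact card_equiv (Equiv.ofBijective ρ hρ) (by simp)

/-- The full factorial design `ι → α` is an orthogonal array of strength 2. -/
theorem exists_isBalancedPair_eval {ι : Type*} [Fintype ι] [DecidableEq ι] [Fintype α]
    {i j : ι} (hij : i ≠ j) :
    ∃ n, IsBalancedPair (fun h : ι → α => h i) (fun h => h j) n := by
  rcases isEmpty_or_nonempty α with hα | ⟨⟨c⟩⟩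
  · exact ⟨0, fun a => isEmptyElim a⟩
  refine ⟨#{h : ι → α | h i = c ∧ h j = c}, fun a b => ?_⟩
  let σ : ι → Equiv.Perm α := fun k =>
    if k = i then Equiv.swap a c else if k = j then Equiv.swap b c else 1
  refine card_equiv (Equiv.piCongrRight σ) fun h => ?_
  simp [σ, hij.symm, Equiv.swap_apply_eq_iff]

end BalancedPair

theorem exists_orthonormal_sum_eq_zero {α : Type*} [Fintype α] [Nonempty α] :
    ∃ χ : Fin (Fintype.card α - 1) → α → ℝ, (∀ i, ∑ a, χ i a = 0) ∧
      ∀ i j, ∑ a, χ i a * χ j a = if i = j then 1 else 0 := by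
  set c : EuclideanSpace ℝ α := WithLp.toLp 2 fun _ => 1
  have hc : c ≠ 0 := fun h => by
    simpa [c] using congrArg (· (Classical.arbitrary α)) h
  have hW : Module.finrank ℝ (ℝ ∙ c)ᗮ = Fintype.card α - 1 := by
    have := Submodule.finrank_add_finrank_orthogonal (ℝ ∙ c)
    rw [finrank_span_singleton hc, finrank_euclideanSpace] at this
    omega
  let b := (stdOrthonormalBasis ℝ (ℝ ∙ c)ᗮ).reindex (finCongr hW)
  refine ⟨fun i a => (b i : EuclideanSpace ℝ α) a, fun i => ?_, fun i j => ?_⟩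
  · have := Submodule.mem_orthogonal_singleton_iff_inner_right.mp (b i).2
    simpa [c, PiLp.inner_apply] using this
  · have := orthonormal_iff_ite.mp b.orthonormal i j
    simpa [PiLp.inner_apply, mul_comm] using this

section RaoBound

variable {R α : Type*} [Fintype R] [Fintype α] [DecidableEq α]

theorem linearIndependent_comp_columns [Nonempty R] {S : Finset (R → α)} {ι : Type*}
    [DecidableEq ι] {χ : ι → α → ℝ} (hχ : ∀ i, ∑ a, χ i a = 0)
    (hχχ : ∀ i j, ∑ a, χ i a * χ j a = if i = j then 1 else 0)
    (huniform : ∀ y ∈ S, ∃ m : ℝ, m ≠ 0 ∧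
      ∀ f : α → ℝ, ∑ r, f (y r) = m * ∑ a, f a)
    (hbal : (S : Set (R → α)).Pairwise fun y z => ∃ n, IsBalancedPair y z n) :
    LinearIndependent ℝ (Option.elim' (WithLp.toLp 2 fun _ => 1)
      fun p : S × ι => WithLp.toLp 2 fun r => χ p.2 (p.1.1 r) :
        Option (S × ι) → EuclideanSpace ℝ R) := by
  have hinner (f g : R → ℝ) :
      inner ℝ (WithLp.toLp 2 f : EuclideanSpace ℝ R) (WithLp.toLp 2 g) = ∑ r, f r * g r := by
    simp [EuclideanSpace.inner_toLp_toLp, dotProduct, mul_comm]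
  refine linearIndependent_of_ne_zero_of_inner_eq_zero ?_ ?_
  · rintro (_ | ⟨⟨y, hy⟩, i⟩) h
    · simpa using congrArg (· (Classical.arbitrary R)) h
    · obtain ⟨m, hm, hsum⟩ := huniform y hy
      have hnorm := hinner (fun r => χ i (y r)) (fun r => χ i (y r))
      rw [hsum fun a => χ i a * χ i a, hχχ, if_pos rfl, mul_one] at hnorm
      simp only [Option.elim'] at h
      rw [h, inner_zero_left] at hnorm
      exact hm hnorm.symm
  · rintro (_ | ⟨⟨y, hy⟩, i⟩) (_ | ⟨⟨z, hz⟩, j⟩) hne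
    · exact absurd rfl hne
    · obtain ⟨m, -, hsum⟩ := huniform z hz
      simp only [Option.elim', hinner, one_mul]
      rw [hsum, hχ, mul_zero]
    · obtain ⟨m, -, hsum⟩ := huniform y hy
      simp only [Option.elim', hinner, mul_one]
      rw [hsum, hχ, mul_zero]
    · simp only [Option.elim', hinner]
      by_cases hyz : y = z
      · subst hyz
        obtain ⟨m, -, hsum⟩ := huniform y hy
        have hij : i ≠ j := fun hij => hne (by rw [hij])
        rw [hsum fun a => χ i a * χ j a, hχχ, if_neg hij, mul_zero]
      · obtain ⟨n, hn⟩ := hbal hy hz hyz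
        rw [hn.sum_eq fun a b => χ i a * χ j b, ← sum_mul_sum, hχ, zero_mul, smul_zero]

/-- The Rao bound for orthogonal arrays of strength 2. -/
theorem card_mul_add_one_le_card_of_pairwise_isBalancedPair {S : Finset (R → α)}
    (hS : 1 < S.card)
    (hbal : (S : Set (R → α)).Pairwise fun y z => ∃ n, IsBalancedPair y z n) :
    S.card * (Fintype.card α - 1) + 1 ≤ Fintype.card R := by
  obtain ⟨y₀, -, z₀, -, hne⟩ := one_lt_card.mp hS
  obtain ⟨r₀, -⟩ := Function.ne_iff.mp hne
  have : Nonempty R := ⟨r₀⟩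
  have : Nonempty α := ⟨y₀ r₀⟩
  have huniform : ∀ y ∈ S, ∃ m : ℝ, m ≠ 0 ∧
      ∀ f : α → ℝ, ∑ r, f (y r) = m * ∑ a, f a := by
    intro y hy
    obtain ⟨z, hz, hzy⟩ := exists_mem_ne hS y
    obtain ⟨n, hn⟩ := hbal hy hz hzy.symm
    exact hn.exists_sum_comp_left
  obtain ⟨χ, hχ, hχχ⟩ := exists_orthonormal_sum_eq_zero (α := α)
  simpa using (linearIndependent_comp_columns hχ hχχ huniform hbal).fintype_card_le_finrank

end RaoBound

section Htv

variable {t v : ℕ}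

theorem bijective_rows_of_mem_Htv (hv : v ≠ 0) {e : Finset (Fin (v ^ t) → Fin v)}
    (he : e ∈ Htv t v) : Function.Bijective fun (r : Fin (v ^ t)) (y : e) => y.1 r := by
  classical
  obtain ⟨-, hcard, hcover⟩ := mem_filter.mp he
  refine (Fintype.bijective_iff_surjective_and_card _).mpr ⟨fun h => ?_, by simp [hcard]⟩
  obtain ⟨r, hr⟩ :=
    hcover fun y => if hy : y ∈ e then h ⟨y, hy⟩ else ⟨0, Nat.pos_of_ne_zero hv⟩
  exact ⟨r, funext fun y => by simpa using hr y.1 y.2⟩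

theorem exists_isBalancedPair_of_mem_Htv (hv : v ≠ 0) {e : Finset (Fin (v ^ t) → Fin v)}
    (he : e ∈ Htv t v) {y z : Fin (v ^ t) → Fin v} (hy : y ∈ e) (hz : z ∈ e)
    (hyz : y ≠ z) :
    ∃ n, IsBalancedPair y z n := by
  classical
  obtain ⟨n, hn⟩ := exists_isBalancedPair_eval (α := Fin v) (i := (⟨y, hy⟩ : e))
    (j := ⟨z, hz⟩) (by simpa using hyz)
  exact ⟨n, hn.comp_bijective (bijective_rows_of_mem_Htv hv he)⟩

theorem card_le_of_pairwise_mem_Htv (ht : t ≠ 0) (hv : 2 ≤ v)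
    {S : Finset (Fin (v ^ t) → Fin v)}
    (hS : (S : Set (Fin (v ^ t) → Fin v)).Pairwise
      fun y z => ∃ e ∈ Htv t v, y ∈ e ∧ z ∈ e) :
    S.card ≤ (v ^ t - 1) / (v - 1) := by
  rw [Nat.le_div_iff_mul_le (by omega)]
  rcases le_or_gt S.card 1 with hS₁ | hS₁
  · have : v ≤ v ^ t := Nat.le_self_pow ht v
    calc S.card * (v - 1) ≤ 1 * (v - 1) := Nat.mul_le_mul_right _ hS₁
      _ ≤ v ^ t - 1 := by omega
  have hbal : (S : Set (Fin (v ^ t) → Fin v)).Pairwise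
      fun y z => ∃ n, IsBalancedPair y z n := by
    intro y hy z hz hyz
    obtain ⟨e, he, hye, hze⟩ := hS hy hz hyz
    exact exists_isBalancedPair_of_mem_Htv (by omega) he hye hze hyz
  have := card_mul_add_one_le_card_of_pairwise_isBalancedPair hS₁ hbal
  simp only [Fintype.card_fin] at this
  omega

end Htv

/-- There is an optimal weighting of `H_{t,v}` whose support has size at most
`(v^t - 1)/(v - 1)`. -/
theorem exists_optimal_weighting_small_support (t v : ℕ) (ht : 2 ≤ t) (hv : 2 ≤ v) :
    ∃ x : (Fin (v ^ t) → Fin v) → ℝ, IsLegalWeighting x ∧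
      weightPoly (Htv t v) x = lagrangian (Htv t v) ∧
      (Function.support x).ncard ≤ (v ^ t - 1) / (v - 1) := by
  classical
  have : Nonempty (Fin (v ^ t) → Fin v) := ⟨fun _ => ⟨0, by omega⟩⟩
  obtain ⟨x, ⟨hlegal, hopt⟩, hcov⟩ := exists_isOptimalWeighting_pairwise_mem_edge (Htv t v)
  refine ⟨x, hlegal, hopt, ?_⟩
  rw [Set.ncard_eq_toFinset_card']
  exact card_le_of_pairwise_mem_Htv (by omega) hv (by simpa using hcov)
end

section
/- If an N × k orthogonal array of strength 2 with index λ over v symbols exists (so N = λv^2 and every pair of columns contains each ordered pair of symbols exactly λ times), then k ≤ ⌊(N − 1)/(v − 1)⌋. -/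
open Finset

lemma ite_one_mul_ite_one (p q : Prop) [Decidable p] [Decidable q] :
    (if p then (1:ℕ) else 0) * (if q then 1 else 0) = if p ∧ q then 1 else 0 := by
  split_ifs with h1 h2 h3 <;> simp_all

set_option maxHeartbeats 1000000

/-- Plackett–Burman: if an `(N; 2, k, v)`-orthogonal array of index `λ` exists
(so `N = λv²` and every pair of distinct columns contains each ordered pair of symbols
exactly `λ` times), then `k ≤ ⌊(N - 1)/(v - 1)⌋`. -/
theorem plackett_burman (N k v lam : ℕ) (hv : 2 ≤ v) (hlam : 1 ≤ lam)
    (hN : N = lam * v ^ 2)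
    (S : Type*) [Fintype S] [DecidableEq S] (hS : Fintype.card S = v)
    (A : Fin N → Fin k → S)
    (horth : ∀ i j : Fin k, i ≠ j → ∀ a b : S,
      (Finset.univ.filter fun r => A r i = a ∧ A r j = b).card = lam) :
    k ≤ (N - 1) / (v - 1) := by
  have hN1 : 1 ≤ N := by nlinarith
  rcases le_or_gt k 1 with hk | hk2
  · -- trivial case
    have hvN : v ≤ N := by nlinarith
    have h1 : 1 ≤ (N - 1) / (v - 1) := by
      rw [Nat.le_div_iff_mul_le (by omega : 0 < v - 1)]
      omega
    omega
  have hk2 : 2 ≤ k := hk2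
  haveI : Nontrivial (Fin k) := Fin.nontrivial_iff_two_le.mpr hk2
  set r0 : Fin N := ⟨0, hN1⟩ with hr0
  set T : Finset (Fin N) := Finset.univ.erase r0 with hTdef
  have hT : T.card = N - 1 := by
    rw [hTdef, card_erase_of_mem (mem_univ _)]
    simp
  -- each symbol appears lam * v times in each column
  have colA : ∀ (i : Fin k) (a : S), (Finset.univ.filter fun r => A r i = a).card = lam * v := by
    intro i a
    obtain ⟨j, hj⟩ := exists_ne i
    have hfib := Finset.card_eq_sum_card_fiberwise
      (s := Finset.univ.filter fun r => A r i = a) (t := Finset.univ)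
      (f := fun r => A r j) (fun x _ => mem_univ _)
    rw [hfib]
    have : ∀ b : S, ((Finset.univ.filter fun r => A r i = a).filter
        fun r => A r j = b).card = lam := by
      intro b
      rw [Finset.filter_filter]
      exact horth i j hj.symm a b
    rw [Finset.sum_congr rfl fun b _ => this b, Finset.sum_const, smul_eq_mul, Finset.card_univ, hS, mul_comm]
  -- agreements with row r0, single column
  have agr1 : ∀ i : Fin k, (T.filter fun r => A r i = A r0 i).card = lam * v - 1 := by
    intro i
    have h0 : r0 ∈ Finset.univ.filter fun r => A r i = A r0 i := by simp
    rw [hTdef, Finset.filter_erase, card_erase_of_mem h0, colA]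
  -- agreements with row r0, two distinct columns
  have agr2 : ∀ i j : Fin k, i ≠ j →
      (T.filter fun r => A r i = A r0 i ∧ A r j = A r0 j).card = lam - 1 := by
    intro i j hij
    have h0 : r0 ∈ Finset.univ.filter fun r => A r i = A r0 i ∧ A r j = A r0 j := by simp
    rw [hTdef, Finset.filter_erase, card_erase_of_mem h0, horth i j hij]
  set f : Fin N → ℕ := fun r => (Finset.univ.filter fun i => A r i = A r0 i).card with hf
  have hfr : ∀ r, f r = ∑ i : Fin k, if A r i = A r0 i then 1 else 0 := by
    intro r; rw [hf]; exact Finset.card_filter _ _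
  have hsum : ∑ r ∈ T, f r = k * (lam * v - 1) := by
    simp_rw [hfr]
    rw [Finset.sum_comm]
    have : ∀ i : Fin k, (∑ r ∈ T, if A r i = A r0 i then 1 else 0) = lam * v - 1 := by
      intro i; rw [← Finset.card_filter]; exact agr1 i
    rw [Finset.sum_congr rfl fun i _ => this i, Finset.sum_const, smul_eq_mul]
    simp
  have hsq : ∑ r ∈ T, f r ^ 2 = k * ((lam * v - 1) + (k - 1) * (lam - 1)) := by
    have h1 : ∀ r, f r ^ 2 = ∑ i : Fin k, ∑ j : Fin k,
        if A r i = A r0 i ∧ A r j = A r0 j then 1 else 0 := by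
      intro r
      rw [sq, hfr, Finset.sum_mul_sum]
      exact Finset.sum_congr rfl fun i _ => Finset.sum_congr rfl fun j _ =>
        ite_one_mul_ite_one _ _
    simp_rw [h1]
    rw [Finset.sum_comm]
    have key : ∀ i : Fin k, (∑ r ∈ T, ∑ j : Fin k,
        if A r i = A r0 i ∧ A r j = A r0 j then 1 else 0)
        = (lam * v - 1) + (k - 1) * (lam - 1) := by
      intro i
      rw [Finset.sum_comm]
      have hdiag : (∑ r ∈ T, if A r i = A r0 i ∧ A r i = A r0 i then 1 else 0)
          = lam * v - 1 := by
        simp_rw [and_self]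
        rw [← Finset.card_filter]; exact agr1 i
      have hoff : ∀ j ∈ Finset.univ.erase i, (∑ r ∈ T,
          if A r i = A r0 i ∧ A r j = A r0 j then 1 else 0) = lam - 1 := by
        intro j hj
        rw [← Finset.card_filter]
        exact agr2 i j (Finset.ne_of_mem_erase hj).symm
      rw [← Finset.add_sum_erase _ _ (Finset.mem_univ i), hdiag,
        Finset.sum_congr rfl hoff, Finset.sum_const, smul_eq_mul,
        Finset.card_erase_of_mem (mem_univ i)]
      simp
    rw [Finset.sum_congr rfl fun i _ => key i, Finset.sum_const, smul_eq_mul]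
    simp
  have CS := sq_sum_le_card_mul_sum_sq (s := T) (f := f)
  rw [hsum, hsq, hT] at CS
  -- now pure arithmetic
  rw [Nat.le_div_iff_mul_le (by omega : 0 < v - 1)]
  have h1l : 1 ≤ lam * v := by nlinarith
  zify [hN1, hlam, h1l, hv, hk2, show 1 ≤ v by omega, show 1 ≤ k by omega] at CS ⊢
  have hNZ : (N : ℤ) = (lam : ℤ) * (v : ℤ) ^ 2 := by exact_mod_cast hN
  rw [hNZ] at CS ⊢
  have hkZ : (2:ℤ) ≤ (k:ℤ) := by exact_mod_cast hk2
  have hlZ : (1:ℤ) ≤ (lam:ℤ) := by exact_mod_cast hlam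
  have hvZ : (2:ℤ) ≤ (v:ℤ) := by exact_mod_cast hv
  have h2 : (k : ℤ) ^ 2 * lam * (v - 1) ^ 2 ≤ ((lam : ℤ) * v ^ 2 - 1) * k * lam * (v - 1) := by
    nlinarith [CS]
  have hpos : (0 : ℤ) < (k : ℤ) * lam * (v - 1) :=
    mul_pos (mul_pos (by linarith) (by linarith)) (by linarith)
  nlinarith [h2, hpos]
end

section
/- Let t ≥ 2, v ≥ 2, and suppose t divides k. Partition [k] into t blocks B_1,…,B_t of size k/t, and let A be the v^t × k array whose rows are all sequences in S^k that are constant on each block B_i (|S| = v). Then A covers a t-set Q of columns if and only if |Q ∩ B_i| ≤ 1 for all i, and consequently A covers exactly (k/t)^t of the t-subsets of columns. -/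
/-- The block construction: partition `[k]` into `t` blocks of size `k/t` (given by the
block-assignment map `b`), and let the rows be all sequences constant on each block.
A `t`-set `Q` is covered iff it meets each block at most once, so exactly `(k/t)^t`
`t`-subsets are covered. -/
theorem block_construction (t v k : ℕ) (ht : 2 ≤ t) (hv : 2 ≤ v) (hdvd : t ∣ k)
    (b : Fin k → Fin t)
    (hb : ∀ i : Fin t, (Finset.univ.filter fun j => b j = i).card = k / t) :
    (∀ Q : Finset (Fin k), Q.card = t →
      (Covers (fun (s : Fin t → Fin v) (j : Fin k) => s (b j)) Q ↔
        ∀ i : Fin t, (Q.filter fun j => b j = i).card ≤ 1)) ∧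
    {Q : Finset (Fin k) | Q.card = t ∧
        Covers (fun (s : Fin t → Fin v) (j : Fin k) => s (b j)) Q}.ncard
      = (k / t) ^ t := by
  classical
  have main : ∀ Q : Finset (Fin k), Q.card = t →
      (Covers (fun (s : Fin t → Fin v) (j : Fin k) => s (b j)) Q ↔
        ∀ i : Fin t, (Q.filter fun j => b j = i).card ≤ 1) := by
    intro Q hQ
    constructor
    · intro hcov i
      by_contra h
      push_neg at h
      obtain ⟨j1, hj1, j2, hj2, hne⟩ := Finset.one_lt_card.mp h
      simp only [Finset.mem_filter] at hj1 hj2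
      obtain ⟨r, hr⟩ := hcov (fun j => if j = j1 then ⟨0, by omega⟩ else ⟨1, by omega⟩)
      have h1 := hr j1 hj1.1
      have h2 := hr j2 hj2.1
      simp only [if_pos rfl, if_neg (Ne.symm hne)] at h1 h2
      have hbb : b j1 = b j2 := by rw [hj1.2, hj2.2]
      rw [hbb, h2] at h1
      exact absurd (congrArg Fin.val h1) (by simp)
    · intro h f
      refine ⟨fun i => if hi : ∃ j ∈ Q, b j = i then f hi.choose else ⟨0, by omega⟩, ?_⟩
      intro j hj
      have hex : ∃ j' ∈ Q, b j' = b j := ⟨j, hj, rfl⟩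
      show (if hi : ∃ j' ∈ Q, b j' = b j then f hi.choose else _) = f j
      rw [dif_pos hex]
      have hc := hex.choose_spec
      have heq := Finset.card_le_one.mp (h (b j)) hex.choose
        (Finset.mem_filter.mpr ⟨hc.1, hc.2⟩) j (Finset.mem_filter.mpr ⟨hj, rfl⟩)
      rw [heq]
  refine ⟨main, ?_⟩
  have hset : {Q : Finset (Fin k) | Q.card = t ∧
      Covers (fun (s : Fin t → Fin v) (j : Fin k) => s (b j)) Q}
      = ↑(Finset.univ.filter fun Q : Finset (Fin k) =>
          Q.card = t ∧ ∀ i : Fin t, (Q.filter fun j => b j = i).card ≤ 1) := by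
    ext Q
    simp only [Set.mem_setOf_eq, Finset.coe_filter, Finset.mem_univ, true_and]
    constructor
    · rintro ⟨h1, h2⟩; exact ⟨h1, (main Q h1).mp h2⟩
    · rintro ⟨h1, h2⟩; exact ⟨h1, (main Q h1).mpr h2⟩
  rw [hset, Set.ncard_coe_finset]
  -- bijection with choices of one column per block
  have hFinj : ∀ c : ∀ i : Fin t, {j : Fin k // b j = i},
      Function.Injective (fun i => (c i).1) := by
    intro c i i' hii
    simp only [] at hii
    exact (c i).2.symm.trans (by rw [hii]; exact (c i').2)
  have hcard : (Finset.univ.filter fun Q : Finset (Fin k) =>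
        Q.card = t ∧ ∀ i : Fin t, (Q.filter fun j => b j = i).card ≤ 1).card
      = Fintype.card (∀ i : Fin t, {j : Fin k // b j = i}) := by
    rw [← Finset.card_univ]
    symm
    apply Finset.card_bij (fun (c : ∀ i : Fin t, {j : Fin k // b j = i}) _ =>
      Finset.univ.image (fun i => (c i).1))
    · intro c _
      simp only [Finset.mem_filter, Finset.mem_univ, true_and]
      refine ⟨?_, ?_⟩
      · rw [Finset.card_image_of_injective _ (hFinj c), Finset.card_univ, Fintype.card_fin]
      · intro i
        apply Finset.card_le_one.mpr
        intro a ha a' ha'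
        simp only [Finset.mem_filter, Finset.mem_image, Finset.mem_univ, true_and] at ha ha'
        obtain ⟨⟨i1, hi1⟩, hba⟩ := ha
        obtain ⟨⟨i2, hi2⟩, hba'⟩ := ha'
        have e1 : i1 = i := (c i1).2.symm.trans (by rw [hi1]; exact hba)
        have e2 : i2 = i := (c i2).2.symm.trans (by rw [hi2]; exact hba')
        rw [← hi1, ← hi2, e1, e2]
    · intro c _ c' _ hcc
      funext i
      apply Subtype.ext
      have hm : (c i).1 ∈ Finset.univ.image (fun i => (c' i).1) := by
        rw [← hcc]; exact Finset.mem_image_of_mem _ (Finset.mem_univ i)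
      obtain ⟨i2, _, hi2⟩ := Finset.mem_image.mp hm
      have e2 : i2 = i := (c' i2).2.symm.trans (by rw [hi2]; exact (c i).2)
      rw [← hi2, e2]
    · intro Q hQ
      simp only [Finset.mem_filter, Finset.mem_univ, true_and] at hQ
      obtain ⟨hQc, hle⟩ := hQ
      have hsum : ∑ i : Fin t, (Q.filter fun j => b j = i).card = t := by
        rw [← Finset.card_eq_sum_card_fiberwise (fun x _ => Finset.mem_univ (b x))]
        exact hQc
      have hone : ∀ i : Fin t, (Q.filter fun j => b j = i).card = 1 := by
        by_contra hc
        push_neg at hc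
        obtain ⟨i0, hi0⟩ := hc
        have hlt : ∑ i : Fin t, (Q.filter fun j => b j = i).card < ∑ _i : Fin t, 1 :=
          Finset.sum_lt_sum (fun i _ => hle i)
            ⟨i0, Finset.mem_univ i0, lt_of_le_of_ne (hle i0) hi0⟩
        simp only [Finset.sum_const, smul_eq_mul, mul_one, Finset.card_univ,
          Fintype.card_fin, hsum] at hlt
        omega
      have hch : ∀ i : Fin t, ∃ a, (Q.filter fun j => b j = i) = {a} :=
        fun i => Finset.card_eq_one.mp (hone i)
      have hmem : ∀ i : Fin t, (hch i).choose ∈ Q ∧ b (hch i).choose = i := by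
        intro i
        have hm := (Finset.eq_singleton_iff_unique_mem.mp (hch i).choose_spec).1
        exact Finset.mem_filter.mp hm
      refine ⟨fun i => ⟨(hch i).choose, (hmem i).2⟩, Finset.mem_univ _, ?_⟩
      have hsub : (Finset.univ.image fun i => (hch i).choose) ⊆ Q := by
        intro a ha
        obtain ⟨i, _, hi⟩ := Finset.mem_image.mp ha
        rw [← hi]; exact (hmem i).1
      have hcardeq : (Finset.univ.image fun i => (hch i).choose).card = Q.card := by
        rw [hQc, Finset.card_image_of_injective, Finset.card_univ, Fintype.card_fin]
        intro i i' hii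
        simp only [] at hii
        exact (hmem i).2.symm.trans (by rw [hii]; exact (hmem i').2)
      exact Finset.eq_of_subset_of_card_le hsub (le_of_eq hcardeq.symm)
  rw [hcard, Fintype.card_pi]
  have : ∀ i : Fin t, Fintype.card {j : Fin k // b j = i} = k / t := by
    intro i
    rw [Fintype.card_subtype]
    exact hb i
  simp only [this, Finset.prod_const, Finset.card_univ, Fintype.card_fin]
end

section
/- Let v be a prime power and k ≥ t ≥ 2. Then there exists a covering array of strength t with k columns over v symbols having at most r·v^t rows, where r = ⌈((t−1)·lg k + lg(e·t)) / lg(1/(1 − c_{t,v}))⌉ and c_{t,v} = ∏_{i=0}^{t−1}(v^t − v^i)/(v^t − 1). Hence CAN(t,k,v) ≤ ⌈((t−1)lg k + lg(et))/lg(1/(1−c_{t,v}))⌉ · v^t. -/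
/-- The covering array number: the least `N` for which an `(N; t, k, v)`-covering array
exists. -/
noncomputable def CAN (t k v : ℕ) : ℕ :=
  sInf {N | ∃ A : Fin N → Fin k → Fin v,
    ∀ Q : Finset (Fin k), Q.card = t → Covers A Q}

/-!
Column `j` of copy `s` of the array is a uniformly random nonzero line functional
`x ↦ ⟨ω (j, s), x⟩` on `𝔽_v^t`. Copy `s` covers a `t`-set `Q` of columns as soon as the functionals
of `Q` are linearly independent, which happens with probability `c_{t,v}`, independently over the
`r` copies. So the bad event "no copy covers `Q`" has probability `(1 - c_{t,v})^r`; it depends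
only on the coordinates `ω (j, ·)`, `j ∈ Q`, hence is mutually independent of the bad events of
all `t`-sets disjoint from `Q`, and fewer than `t·C(k, t-1)` other `t`-sets meet `Q`. The
symmetric Lovász Local Lemma then yields an `ω` avoiding every bad event as soon as
`e · t·C(k, t-1) · (1 - c_{t,v})^r ≤ 1`, and the choice of `r` guarantees exactly this.
-/

open Finset

section LovaszLocalLemma

variable {Ω I : Type*} [Fintype Ω] [DecidableEq Ω]

def avoid (E : I → Finset Ω) (T : Finset I) : Finset Ω := {ω | ∀ j ∈ T, ω ∉ E j}

variable {E : I → Finset Ω} {T T' : Finset I} {ω : Ω}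

@[simp] lemma mem_avoid : ω ∈ avoid E T ↔ ∀ j ∈ T, ω ∉ E j := by simp [avoid]

@[simp] lemma avoid_empty : avoid E ∅ = univ := by ext; simp

lemma avoid_anti (h : T ⊆ T') : avoid E T' ⊆ avoid E T :=
  fun _ hω ↦ mem_avoid.2 fun j hj ↦ mem_avoid.1 hω j (h hj)

lemma dens_avoid_insert [DecidableEq I] (a : I) :
    ((avoid E (insert a T)).dens : ℝ) = (avoid E T).dens - (E a ∩ avoid E T).dens := by
  have h : avoid E (insert a T) = avoid E T \ E a := by ext; simp [and_comm]
  rw [h, inter_comm, eq_sub_iff_add_eq]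
  exact_mod_cast dens_sdiff_add_dens_inter (avoid E T) (E a)

lemma one_sub_pow_mul_dens_avoid_le [DecidableEq I] {x : ℝ} (hx : x ≤ 1) {m : ℕ}
    (hE : ∀ T : Finset I, #T < m → ∀ i ∉ T,
      ((E i ∩ avoid E T).dens : ℝ) ≤ x * (avoid E T).dens)
    {W U : Finset I} (hWU : Disjoint W U) (hm : #(W ∪ U) ≤ m) :
    (1 - x) ^ #W * (avoid E U).dens ≤ (avoid E (W ∪ U)).dens := by
  induction W using Finset.induction_on with
  | empty => simp
  | insert a W haW ih =>
    rw [insert_union] at hm ⊢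
    rw [disjoint_insert_left] at hWU
    have haWU : a ∉ W ∪ U := by simp [haW, hWU.1]
    have hlt : #(W ∪ U) < m := by rwa [card_insert_of_notMem haWU] at hm
    have hstep := hE _ hlt a haWU
    have hprev := ih hWU.2 hlt.le
    rw [dens_avoid_insert, card_insert_of_notMem haW, pow_succ]
    calc (1 - x) ^ #W * (1 - x) * (avoid E U).dens
        = (1 - x) * ((1 - x) ^ #W * (avoid E U).dens) := by ring
      _ ≤ (1 - x) * (avoid E (W ∪ U)).dens := by gcongr
      _ ≤ _ := by linarith

variable [Fintype I] [DecidableEq I] (G : I → I → Prop) [DecidableRel G] {d : ℕ} {x : ℝ}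

/-- The bound `P(E i | avoid E T) ≤ x` of the usual proof, multiplied out so that
`P(avoid E T) = 0` needs no separate treatment. -/
lemma dens_inter_avoid_le (hx0 : 0 ≤ x) (hx1 : x ≤ 1) (hdeg : ∀ i, #{j | G i j} ≤ d)
    (hind : ∀ i T, i ∉ T → (∀ j ∈ T, ¬G i j) →
      ((E i ∩ avoid E T).dens : ℝ) = (E i).dens * (avoid E T).dens)
    (hp : ∀ i, ((E i).dens : ℝ) ≤ x * (1 - x) ^ d) (T : Finset I) {i : I} (hi : i ∉ T) :
    ((E i ∩ avoid E T).dens : ℝ) ≤ x * (avoid E T).dens := by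
  induction hT : #T using Nat.strong_induction_on generalizing T i with | _ m ih
  set T₁ := T.filter (G i)
  set T₂ := T.filter (fun j ↦ ¬G i j)
  have hsplit : T₁ ∪ T₂ = T := filter_union_filter_not_eq _ _
  have hpeel := one_sub_pow_mul_dens_avoid_le hx1 (m := m)
    (fun T' hT' j hj ↦ ih _ hT' T' hj rfl) (disjoint_filter_filter_not T T (G i))
    (by rw [hsplit, hT])
  rw [hsplit] at hpeel
  have hT₁ : #T₁ ≤ d := (card_le_card (filter_subset_filter _ (subset_univ T))).trans (hdeg i)
  calc ((E i ∩ avoid E T).dens : ℝ)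
      ≤ (E i ∩ avoid E T₂).dens := by
        gcongr; exact avoid_anti (filter_subset _ _)
    _ = (E i).dens * (avoid E T₂).dens :=
        hind i T₂ (fun h ↦ hi (filter_subset _ _ h)) (fun j hj ↦ (mem_filter.1 hj).2)
    _ ≤ x * (1 - x) ^ d * (avoid E T₂).dens := by gcongr; exact hp i
    _ ≤ x * ((1 - x) ^ #T₁ * (avoid E T₂).dens) := by
        rw [mul_assoc]
        have : (1 - x) ^ d ≤ (1 - x) ^ #T₁ := pow_le_pow_of_le_one (by linarith) (by linarith) hT₁
        gcongr
    _ ≤ x * (avoid E T).dens := by gcongr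

theorem exists_forall_notMem_of_dens_le [Nonempty Ω] (hx0 : 0 ≤ x) (hx1 : x < 1)
    (hdeg : ∀ i, #{j | G i j} ≤ d)
    (hind : ∀ i T, i ∉ T → (∀ j ∈ T, ¬G i j) →
      ((E i ∩ avoid E T).dens : ℝ) = (E i).dens * (avoid E T).dens)
    (hp : ∀ i, ((E i).dens : ℝ) ≤ x * (1 - x) ^ d) :
    ∃ ω, ∀ i, ω ∉ E i := by
  have hpos := one_sub_pow_mul_dens_avoid_le hx1.le (m := #(univ : Finset I))
    (fun T _ i hi ↦ dens_inter_avoid_le G hx0 hx1.le hdeg hind hp T hi)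
    (disjoint_empty_right univ) (by simp)
  simp only [avoid_empty, dens_univ, union_empty] at hpos
  have : (0 : ℝ) < (avoid E univ).dens := (pow_pos (sub_pos.2 hx1) _).trans_le (by simpa using hpos)
  obtain ⟨ω, hω⟩ := dens_pos.1 (by exact_mod_cast this)
  exact ⟨ω, fun i ↦ mem_avoid.1 hω i (mem_univ i)⟩

lemma inv_exp_one_le_one_sub_inv_pow (d : ℕ) : (Real.exp 1)⁻¹ ≤ (1 - ((d : ℝ) + 1)⁻¹) ^ d := by
  rcases Nat.eq_zero_or_pos d with rfl | hd
  · simpa using inv_le_one_of_one_le₀ (Real.one_le_exp zero_le_one)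
  have hd' : (0 : ℝ) < d := by exact_mod_cast hd
  have h : 1 - ((d : ℝ) + 1)⁻¹ = (1 + (d : ℝ)⁻¹)⁻¹ := by field_simp; ring
  rw [h, inv_pow]
  exact inv_anti₀ (by positivity) Real.one_add_inv_pow_le_exp

theorem exists_forall_notMem_of_exp_mul_le [Nonempty Ω] (hd : 1 ≤ d)
    (hdeg : ∀ i, #{j | G i j} ≤ d)
    (hind : ∀ i T, i ∉ T → (∀ j ∈ T, ¬G i j) →
      ((E i ∩ avoid E T).dens : ℝ) = (E i).dens * (avoid E T).dens)
    (hp : ∀ i, Real.exp 1 * (d + 1) * (E i).dens ≤ 1) :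
    ∃ ω, ∀ i, ω ∉ E i := by
  have hd' : (1 : ℝ) ≤ d := by exact_mod_cast hd
  refine exists_forall_notMem_of_dens_le G (x := ((d : ℝ) + 1)⁻¹) (by positivity)
    (inv_lt_one_of_one_lt₀ (by linarith)) hdeg hind fun i ↦ ?_
  calc ((E i).dens : ℝ) ≤ ((d : ℝ) + 1)⁻¹ * (Real.exp 1)⁻¹ := by
        rw [← mul_inv, ← one_div, le_div_iff₀ (by positivity)]
        linarith [hp i]
    _ ≤ _ := by gcongr; exact inv_exp_one_le_one_sub_inv_pow d

end LovaszLocalLemma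

section ProductSpace

def IsLocalOn {ι V : Type*} (A : Finset (ι → V)) (u : Finset ι) : Prop :=
  ∀ ω σ : ι → V, (∀ j ∈ u, ω j = σ j) → (ω ∈ A ↔ σ ∈ A)

variable {ι V : Type*} {A B : Finset (ι → V)} {u w : Finset ι}

lemma IsLocalOn.mono (hA : IsLocalOn A u) (h : u ⊆ w) : IsLocalOn A w :=
  fun ω σ hωσ ↦ hA ω σ fun j hj ↦ hωσ j (h hj)

variable [Fintype ι] [DecidableEq ι] [Fintype V]

lemma dens_filter_comp_of_injective [Nonempty V] {α : Type*} [Fintype α] [DecidableEq α]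
    {g : α → ι} (hg : g.Injective) (P : (α → V) → Prop) [DecidablePred P] :
    ({ω : ι → V | P (ω ∘ g)} : Finset _).dens = ({h | P h} : Finset (α → V)).dens := by
  classical
  let R := {i // i ∉ Set.range g} → V
  let e : (ι → V) ≃ (α → V) × R :=
    (Equiv.piEquivPiSubtypeProd (· ∈ Set.range g) fun _ ↦ V).trans
      (Equiv.prodCongr ((Equiv.ofInjective g hg).symm.arrowCongr (Equiv.refl V)) (Equiv.refl R))
  have hcard : Fintype.card {ω : ι → V // P (ω ∘ g)} = Fintype.card {h // P h} * Fintype.card R :=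
    (Fintype.card_congr ((e.subtypeEquiv fun _ ↦ Iff.rfl).trans
      Equiv.prodSubtypeFstEquivSubtypeProd)).trans (Fintype.card_prod _ _)
  have hΩ : Fintype.card (ι → V) = Fintype.card (α → V) * Fintype.card R :=
    (Fintype.card_congr e).trans (Fintype.card_prod _ _)
  rw [dens_eq_card_div_card, dens_eq_card_div_card, ← Fintype.card_subtype,
    ← Fintype.card_subtype, hcard, hΩ, Nat.cast_mul, Nat.cast_mul,
    mul_div_mul_right _ _ (by positivity)]

variable [DecidableEq V]

lemma IsLocalOn.avoid {I : Type*} {E : I → Finset (ι → V)} {S : I → Finset ι} {T : Finset I}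
    (hE : ∀ j ∈ T, IsLocalOn (E j) (S j)) : IsLocalOn (avoid E T) (T.biUnion S) := by
  intro ω σ h
  simp only [mem_avoid]
  exact forall₂_congr fun j hj ↦
    not_congr (hE j hj ω σ fun i hi ↦ h i (mem_biUnion.2 ⟨j, hj, hi⟩))

lemma card_inter_mul_card_of_isLocalOn (hA : IsLocalOn A u) (hB : IsLocalOn B w)
    (huw : Disjoint u w) : #(A ∩ B) * Fintype.card (ι → V) = #A * #B := by
  rw [← card_univ, ← card_product, ← card_product]
  -- swapping the `u`-coordinates of two outcomes is an involution of `(ι → V) × (ι → V)`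
  set swap : (ι → V) × (ι → V) → (ι → V) × (ι → V) :=
    fun p ↦ (u.piecewise p.1 p.2, u.piecewise p.2 p.1)
  have hswap : ∀ p, swap (swap p) = p := fun p ↦ by
    simp [swap, piecewise_idem_left, piecewise_idem_right, piecewise_same]
  have hu : ∀ ω σ : ι → V, ∀ j ∈ u, ω j = u.piecewise ω σ j :=
    fun ω σ j hj ↦ (piecewise_eq_of_mem _ _ _ hj).symm
  have hw : ∀ ω σ : ι → V, ∀ j ∈ w, σ j = u.piecewise ω σ j :=
    fun ω σ j hj ↦ (piecewise_eq_of_notMem _ _ _ (disjoint_right.1 huw hj)).symm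
  refine card_nbij' swap swap (fun p hp ↦ ?_) (fun p hp ↦ ?_) (fun p _ ↦ hswap p)
    (fun p _ ↦ hswap p)
  · simp only [coe_product, Set.mem_prod, mem_coe, mem_inter] at hp ⊢
    exact ⟨(hA _ _ (hu _ _)).1 hp.1.1, (hB _ _ (hw _ _)).1 hp.1.2⟩
  · simp only [coe_product, Set.mem_prod, mem_coe, mem_inter, mem_univ, and_true] at hp ⊢
    exact ⟨(hA _ _ (hu _ _)).1 hp.1, (hB _ _ (hw _ _)).1 hp.2⟩

lemma dens_inter_of_isLocalOn (hA : IsLocalOn A u) (hB : IsLocalOn B w) (huw : Disjoint u w) :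
    (A ∩ B).dens = A.dens * B.dens := by
  rcases (Fintype.card (ι → V)).eq_zero_or_pos with h | h
  · simp [dens, h]
  rw [dens, dens, dens, div_mul_div_comm, ← Nat.cast_mul,
    ← card_inter_mul_card_of_isLocalOn hA hB huw, Nat.cast_mul,
    mul_div_mul_right _ _ (by positivity)]

lemma dens_avoid_of_isLocalOn [Nonempty V] {I : Type*} [DecidableEq I] {E : I → Finset (ι → V)}
    {S : I → Finset ι} (hE : ∀ j, IsLocalOn (E j) (S j)) {T : Finset I}
    (hT : (T : Set I).PairwiseDisjoint S) :
    ((avoid E T).dens : ℝ) = ∏ j ∈ T, (1 - ((E j).dens : ℝ)) := by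
  induction T using Finset.induction_on with
  | empty => simp
  | insert a T ha ih =>
    rw [coe_insert, Set.pairwiseDisjoint_insert_of_notMem (by simpa)] at hT
    have hind := dens_inter_of_isLocalOn (hE a) (IsLocalOn.avoid fun j _ ↦ hE j)
      ((disjoint_biUnion_right _ _ _).2 hT.2)
    rw [dens_avoid_insert, prod_insert ha, ← ih hT.1, hind]
    push_cast
    ring

theorem exists_forall_notMem_of_isLocalOn [Nonempty V] {I : Type*} [Fintype I] [DecidableEq I]
    {E : I → Finset (ι → V)} {S : I → Finset ι} (hE : ∀ i, IsLocalOn (E i) (S i)) {d : ℕ}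
    (hd : 1 ≤ d) (hdeg : ∀ i, #{j | j ≠ i ∧ ¬Disjoint (S i) (S j)} ≤ d)
    (hp : ∀ i, Real.exp 1 * (d + 1) * (E i).dens ≤ 1) : ∃ ω, ∀ i, ω ∉ E i := by
  refine exists_forall_notMem_of_exp_mul_le (fun i j ↦ j ≠ i ∧ ¬Disjoint (S i) (S j)) hd hdeg
    (fun i T hi hT ↦ ?_) hp
  have hdisj : Disjoint (S i) (T.biUnion S) := (disjoint_biUnion_right _ _ _).2 fun j hj ↦
    not_not.1 fun h ↦ hT j hj ⟨ne_of_mem_of_not_mem hj hi, h⟩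
  exact_mod_cast dens_inter_of_isLocalOn (hE i) (IsLocalOn.avoid fun j _ ↦ hE j) hdisj

end ProductSpace

section LinearAlgebra

open Module

lemma exists_dotProduct_eq_of_linearIndependent {K Q n : Type*} [Field K] [Fintype Q] [Fintype n]
    [DecidableEq n] (hQ : Fintype.card Q = Fintype.card n) {a : Q → n → K}
    (ha : LinearIndependent K a) (g : Q → K) : ∃ x, ∀ j, a j ⬝ᵥ x = g j := by
  obtain e : n ≃ Q := (Fintype.equivOfCardEq hQ).symm
  have hM : IsUnit (Matrix.of fun i ↦ a (e i)) :=
    Matrix.linearIndependent_rows_iff_isUnit.1 (ha.comp e e.injective)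
  obtain ⟨x, hx⟩ := Matrix.mulVec_surjective_iff_isUnit.2 hM (g ∘ e)
  refine ⟨x, fun j ↦ ?_⟩
  simpa [Matrix.mulVec] using congrFun hx (e.symm j)

/-- The probability that `m` independent uniformly random nonzero vectors of `𝔽_q^n` are linearly
independent; the paper's `c_{t,v}` is `independenceProb v t t`. -/
noncomputable def independenceProb (q n m : ℕ) : ℝ :=
  ∏ i ∈ range m, ((q : ℝ) ^ n - q ^ i) / (q ^ n - 1)

lemma independenceProb_pos {q n m : ℕ} (hq : 2 ≤ q) (hmn : m ≤ n) :
    0 < independenceProb q n m := by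
  have hq' : (1 : ℝ) < q := by exact_mod_cast hq
  refine prod_pos fun i hi ↦ div_pos ?_ ?_
  · exact sub_pos.2 (pow_lt_pow_right₀ hq' ((mem_range.1 hi).trans_le hmn))
  · exact sub_pos.2 (one_lt_pow₀ hq' (by have := mem_range.1 hi; omega))

lemma independenceProb_lt_one {q n m : ℕ} (hq : 2 ≤ q) (hm : 2 ≤ m) (hmn : m ≤ n) :
    independenceProb q n m < 1 := by
  have hq' : (1 : ℝ) < q := by exact_mod_cast hq
  have hn : (q : ℝ) < q ^ n := by simpa using pow_lt_pow_right₀ hq' (by omega : 1 < n)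
  have hfactor : ∀ i ∈ range m, 0 ≤ ((q : ℝ) ^ n - q ^ i) / (q ^ n - 1) ∧
      ((q : ℝ) ^ n - q ^ i) / (q ^ n - 1) ≤ 1 := fun i hi ↦ by
    have hi : (q : ℝ) ^ i < q ^ n := pow_lt_pow_right₀ hq' ((mem_range.1 hi).trans_le hmn)
    have : (1 : ℝ) ≤ q ^ i := one_le_pow₀ hq'.le
    exact ⟨div_nonneg (by linarith) (by linarith), (div_le_one (by linarith)).2 (by linarith)⟩
  have h1 : 1 ∈ range m := mem_range.2 (by omega)
  rw [independenceProb, ← mul_prod_erase _ _ h1]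
  calc ((q : ℝ) ^ n - q ^ 1) / (q ^ n - 1) *
        ∏ i ∈ (range m).erase 1, ((q : ℝ) ^ n - q ^ i) / (q ^ n - 1)
      ≤ ((q : ℝ) ^ n - q ^ 1) / (q ^ n - 1) * 1 := by
        gcongr
        · exact (hfactor 1 h1).1
        · exact prod_le_one (fun i hi ↦ (hfactor i (mem_of_mem_erase hi)).1)
            fun i hi ↦ (hfactor i (mem_of_mem_erase hi)).2
    _ < 1 := by rw [mul_one, pow_one, div_lt_one (by linarith)]; linarith

variable {K W Q : Type*} [Field K] [Fintype K] [AddCommGroup W] [Module K W] [Fintype W]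
  [Fintype Q]

lemma card_linearIndependent_nonzero (hQ : Fintype.card Q ≤ finrank K W) :
    Nat.card {h : Q → {w : W // w ≠ 0} // LinearIndependent K fun j ↦ (h j : W)} =
      ∏ i ∈ range (Fintype.card Q), (Fintype.card K ^ finrank K W - Fintype.card K ^ i) := by
  let e := Fintype.equivFin Q
  have hnonzero : {h : Q → {w : W // w ≠ 0} // LinearIndependent K fun j ↦ (h j : W)} ≃
      {s : Q → W // LinearIndependent K s} :=
    { toFun := fun h ↦ ⟨fun j ↦ h.1 j, h.2⟩
      invFun := fun s ↦ ⟨fun j ↦ ⟨s.1 j, s.2.ne_zero j⟩, s.2⟩ }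
  have hreindex : {s : Q → W // LinearIndependent K s} ≃
      {s : Fin (Fintype.card Q) → W // LinearIndependent K s} :=
    (e.arrowCongr (Equiv.refl W)).subtypeEquiv fun s ↦ (linearIndependent_equiv e.symm).symm
  rw [Nat.card_congr (hnonzero.trans hreindex), card_linearIndependent hQ,
    Fin.prod_univ_eq_prod_range (fun i ↦ Fintype.card K ^ finrank K W - Fintype.card K ^ i)]

open scoped Classical in
lemma dens_linearIndependent_nonzero [DecidableEq W] (hQ : Fintype.card Q ≤ finrank K W) :
    (({h | LinearIndependent K fun j ↦ (h j : W)} : Finset (Q → {w : W // w ≠ 0})).dens : ℝ) =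
      independenceProb (Fintype.card K) (finrank K W) (Fintype.card Q) := by
  set q := Fintype.card K
  set n := finrank K W
  have hq : 1 ≤ q := Fintype.card_pos
  have hW : Fintype.card {w : W // w ≠ 0} = q ^ n - 1 := by
    rw [Fintype.card_subtype_compl (· = (0 : W)), Fintype.card_subtype_eq (0 : W),
      Module.card_eq_pow_finrank (K := K)]
  have hLI : #({h | LinearIndependent K fun j ↦ (h j : W)} : Finset (Q → {w : W // w ≠ 0})) =
      ∏ i ∈ range (Fintype.card Q), (q ^ n - q ^ i) := by
    rw [← Fintype.card_subtype, Fintype.card_eq_nat_card, card_linearIndependent_nonzero hQ]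
  rw [dens_eq_card_div_card, NNRat.cast_div, NNRat.cast_natCast, NNRat.cast_natCast, hLI,
    Fintype.card_fun, hW, independenceProb, prod_div_distrib, prod_const, card_range,
    Nat.cast_prod, Nat.cast_pow, Nat.cast_sub (Nat.one_le_pow _ _ hq)]
  congr 1
  · refine prod_congr rfl fun i hi ↦ ?_
    rw [Nat.cast_sub (Nat.pow_le_pow_right hq ((mem_range.1 hi).le.trans hQ))]
    push_cast
    rfl
  · push_cast
    rfl

end LinearAlgebra

lemma card_filter_mem_le {α : Type*} [Fintype α] [DecidableEq α] (a : α) (t : ℕ) :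
    #{Q : {Q : Finset α // #Q = t} | a ∈ Q.1} ≤ (Fintype.card α).choose (t - 1) := by
  rw [← card_univ, ← card_powersetCard]
  refine card_le_card_of_injOn (fun Q ↦ Q.1.erase a) (fun Q hQ ↦ ?_) fun Q hQ Q' hQ' h ↦ ?_
  · simp only [coe_filter, mem_univ, true_and, Set.mem_ofPred_eq] at hQ
    simp [card_erase_of_mem hQ, Q.2]
  · simp only [coe_filter, mem_univ, true_and, Set.mem_ofPred_eq] at hQ hQ'
    exact Subtype.ext (erase_injOn' a hQ hQ' h)

lemma card_filter_not_disjoint_le {α : Type*} [Fintype α] [DecidableEq α] (Q : Finset α)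
    (t : ℕ) :
    #{Q' : {Q : Finset α // #Q = t} | ¬Disjoint Q Q'.1} ≤ #Q * (Fintype.card α).choose (t - 1) := by
  calc #{Q' : {Q : Finset α // #Q = t} | ¬Disjoint Q Q'.1}
      ≤ #(Q.biUnion fun a ↦ {Q' : {Q : Finset α // #Q = t} | a ∈ Q'.1}) := by
        refine card_le_card fun Q' hQ' ↦ ?_
        obtain ⟨a, haQ, haQ'⟩ := not_disjoint_iff.1 (mem_filter.1 hQ').2
        exact mem_biUnion.2 ⟨a, haQ, mem_filter.2 ⟨mem_univ _, haQ'⟩⟩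
    _ ≤ ∑ a ∈ Q, #{Q' : {Q : Finset α // #Q = t} | a ∈ Q'.1} := card_biUnion_le
    _ ≤ #Q * (Fintype.card α).choose (t - 1) := by
        simpa using sum_le_card_nsmul _ _ _ fun a _ ↦ card_filter_mem_le a t

lemma CAN_le_card_of_covers {R S : Type*} [Fintype R] [Fintype S] {t k : ℕ} (A : R → Fin k → S)
    (hA : ∀ Q : Finset (Fin k), #Q = t → Covers A Q) :
    CAN t k (Fintype.card S) ≤ Fintype.card R := by
  let eR := Fintype.equivFin R
  let eS := Fintype.equivFin S
  refine Nat.sInf_le ⟨fun n j ↦ eS (A (eR.symm n) j), fun Q hQ f ↦ ?_⟩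
  obtain ⟨r, hr⟩ := hA Q hQ fun j ↦ eS.symm (f j)
  exact ⟨eR r, fun j hj ↦ by simp [hr j hj]⟩

section LinearArrays

variable {F : Type*} [Field F] {t k r : ℕ}

/-- The concatenation of `r` copies of the algebraic `v^t × k` array: in copy `s`, column `j` is
the line functional `⟨ω (j, s), ·⟩` evaluated at all points of `F^t`. -/
def linearArray (ω : Fin k × Fin r → Fin t → F) : Fin r × (Fin t → F) → Fin k → F :=
  fun p j ↦ ω (j, p.1) ⬝ᵥ p.2

lemma covers_linearArray {ω : Fin k × Fin r → Fin t → F} {Q : Finset (Fin k)} (hQ : #Q = t)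
    {s : Fin r} (hs : LinearIndependent F fun j : Q ↦ ω (j, s)) : Covers (linearArray ω) Q := by
  intro f
  obtain ⟨x, hx⟩ := exists_dotProduct_eq_of_linearIndependent (by simpa using hQ) hs fun j ↦ f j
  exact ⟨(s, x), fun j hj ↦ hx ⟨j, hj⟩⟩

instance [NeZero t] : Nonempty {a : Fin t → F // a ≠ 0} := nonempty_subtype.2 (exists_ne 0)

variable [Fintype F] [DecidableEq F]

open scoped Classical in
noncomputable def independentCopy (Q : Finset (Fin k)) (s : Fin r) :
    Finset (Fin k × Fin r → {a : Fin t → F // a ≠ 0}) :=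
  {ω | LinearIndependent F fun j : Q ↦ (ω (j, s) : Fin t → F)}

noncomputable def uncovered (Q : Finset (Fin k)) :
    Finset (Fin k × Fin r → {a : Fin t → F // a ≠ 0}) :=
  avoid (independentCopy Q) univ

lemma isLocalOn_independentCopy (Q : Finset (Fin k)) (s : Fin r) :
    IsLocalOn (independentCopy (F := F) (t := t) Q s) (Q ×ˢ {s}) := by
  intro ω σ h
  have : (fun j : Q ↦ (ω (j, s) : Fin t → F)) = fun j : Q ↦ (σ (j, s) : Fin t → F) :=
    funext fun j ↦ by rw [h (j, s) (mem_product.2 ⟨j.2, mem_singleton_self s⟩)]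
  simp [independentCopy, this]

lemma isLocalOn_uncovered (Q : Finset (Fin k)) :
    IsLocalOn (uncovered (F := F) (t := t) (r := r) Q) (Q ×ˢ univ) :=
  (IsLocalOn.avoid fun s _ ↦ isLocalOn_independentCopy Q s).mono
    (biUnion_subset.2 fun _ _ ↦ product_subset_product_right (subset_univ _))

lemma dens_independentCopy [NeZero t] {Q : Finset (Fin k)} (hQ : #Q = t) (s : Fin r) :
    ((independentCopy (F := F) (t := t) Q s).dens : ℝ) =
      independenceProb (Fintype.card F) t t := by
  classical
  have hg : (fun j : Q ↦ ((j : Fin k), s)).Injective :=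
    fun i j h ↦ Subtype.ext (Prod.ext_iff.1 h).1
  have hLI := dens_linearIndependent_nonzero (K := F) (W := Fin t → F) (Q := Q) (by simp [hQ])
  simp only [Module.finrank_fin_fun, Fintype.card_coe, hQ] at hLI
  have h := dens_filter_comp_of_injective (V := {a : Fin t → F // a ≠ 0}) hg
    (fun h ↦ LinearIndependent F fun j ↦ (h j : Fin t → F))
  simp only [Function.comp_apply] at h
  rw [← hLI, independentCopy, h]
  -- the two sides differ only in their (subsingleton) `Fintype` and `Decidable` instances
  congr!

lemma dens_uncovered [NeZero t] {Q : Finset (Fin k)} (hQ : #Q = t) :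
    ((uncovered (F := F) (t := t) (r := r) Q).dens : ℝ) =
      (1 - independenceProb (Fintype.card F) t t) ^ r := by
  rw [uncovered, dens_avoid_of_isLocalOn (isLocalOn_independentCopy Q)
    fun s _ s' _ hss' ↦ disjoint_product.2 (Or.inr (disjoint_singleton.2 hss'))]
  simp [dens_independentCopy hQ]

lemma covers_of_notMem_uncovered {ω : Fin k × Fin r → {a : Fin t → F // a ≠ 0}}
    {Q : Finset (Fin k)} (hQ : #Q = t) (hω : ω ∉ uncovered Q) :
    Covers (linearArray fun p ↦ (ω p : Fin t → F)) Q := by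
  obtain ⟨s, -, hs⟩ : ∃ s ∈ univ, ω ∈ independentCopy Q s := by simpa [uncovered] using hω
  exact covers_linearArray hQ (by simpa [independentCopy] using hs)

lemma card_overlapping_le (ht : 0 < t) (Q : {Q : Finset (Fin k) // #Q = t}) :
    #{Q' | Q' ≠ Q ∧ ¬Disjoint (Q.1 ×ˢ (univ : Finset (Fin r))) (Q'.1 ×ˢ univ)} ≤
      t * k.choose (t - 1) - 1 := by
  have hQ : Q ∈ ({Q' | ¬Disjoint Q.1 Q'.1} : Finset {Q : Finset (Fin k) // #Q = t}) := by
    simpa [← nonempty_iff_ne_empty, ← card_pos, Q.2] using ht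
  have hsub : ({Q' | Q' ≠ Q ∧ ¬Disjoint (Q.1 ×ˢ (univ : Finset (Fin r))) (Q'.1 ×ˢ univ)} :
      Finset {Q : Finset (Fin k) // #Q = t}) ⊆ ({Q' | ¬Disjoint Q.1 Q'.1} : Finset _).erase Q :=
    fun Q' hQ' ↦ by
      simp only [mem_filter, mem_univ, true_and, disjoint_product, not_or] at hQ'
      simpa [hQ'.1] using hQ'.2.1
  have := card_filter_not_disjoint_le Q.1 t
  rw [Q.2, Fintype.card_fin] at this
  exact (card_le_card hsub).trans
    ((card_erase_of_mem hQ).le.trans (Nat.sub_le_sub_right this 1))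

theorem exists_covers_linearArray (ht : 2 ≤ t) (hk : t ≤ k)
    (h : Real.exp 1 * (t * k.choose (t - 1)) *
      (1 - independenceProb (Fintype.card F) t t) ^ r ≤ 1) :
    ∃ ω : Fin k × Fin r → Fin t → F, ∀ Q : Finset (Fin k), #Q = t → Covers (linearArray ω) Q := by
  have : NeZero t := ⟨by omega⟩
  have hD : 2 ≤ t * k.choose (t - 1) := le_mul_of_le_of_one_le ht (Nat.choose_pos (by omega))
  obtain ⟨ω, hω⟩ := exists_forall_notMem_of_isLocalOn
    (E := fun Q : {Q : Finset (Fin k) // #Q = t} ↦ uncovered (F := F) (r := r) Q.1)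
    (fun Q ↦ isLocalOn_uncovered Q.1) (d := t * k.choose (t - 1) - 1) (by omega)
    (card_overlapping_le (by omega)) fun Q ↦ by
      rw [dens_uncovered Q.2, Nat.cast_sub (by omega), Nat.cast_one, sub_add_cancel]
      exact_mod_cast h
  exact ⟨fun p ↦ ω p, fun Q hQ ↦ covers_of_notMem_uncovered hQ (hω ⟨Q, hQ⟩)⟩

end LinearArrays

lemma mul_pow_toNat_ceil_le_one {a X : ℝ} (ha0 : 0 < a) (ha1 : a < 1) (hX : 0 < X) :
    X * a ^ ⌈Real.logb 2 X / Real.logb 2 (1 / a)⌉.toNat ≤ 1 := by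
  set r := ⌈Real.logb 2 X / Real.logb 2 (1 / a)⌉.toNat
  have hL : 0 < Real.logb 2 (1 / a) := Real.logb_pos one_lt_two (one_lt_one_div ha0 ha1)
  have hr : Real.logb 2 X / Real.logb 2 (1 / a) ≤ r :=
    (Int.le_ceil _).trans (by exact_mod_cast Int.self_le_toNat _)
  have hlog : Real.logb 2 X ≤ Real.logb 2 ((1 / a) ^ r) := by
    rw [Real.logb_pow]; exact (div_le_iff₀ hL).1 hr
  have := (Real.logb_le_logb one_lt_two hX (by positivity)).1 hlog
  rwa [div_pow, one_pow, le_div_iff₀ (by positivity)] at this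

theorem CAN_le_of_exp_mul_le {t k v r : ℕ} (ht : 2 ≤ t) (hk : t ≤ k) (hv : IsPrimePow v)
    (h : Real.exp 1 * (t * k.choose (t - 1)) * (1 - independenceProb v t t) ^ r ≤ 1) :
    CAN t k v ≤ r * v ^ t := by
  obtain ⟨_⟩ : Nonempty (Field (Fin v)) := Fintype.nonempty_field_iff.2 (by simpa using hv)
  obtain ⟨ω, hω⟩ := exists_covers_linearArray (F := Fin v) ht hk (by simpa using h)
  simpa using CAN_le_card_of_covers _ hω

lemma sub_one_mul_logb_add_logb_exp_mul {t k : ℕ} (ht : 1 ≤ t) (hk : 1 ≤ k) :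
    ((t : ℝ) - 1) * Real.logb 2 k + Real.logb 2 (Real.exp 1 * t) =
      Real.logb 2 (Real.exp 1 * (t * k ^ (t - 1))) := by
  rw [← mul_assoc, Real.logb_mul (x := Real.exp 1 * t) (by positivity) (by simp; omega),
    Real.logb_pow, Nat.cast_sub ht, Nat.cast_one, add_comm]

/-- For a prime power `v` and `k ≥ t ≥ 2`,
`CAN(t,k,v) ≤ ⌈((t-1)·lg k + lg(e·t)) / lg(1/(1 - c_{t,v}))⌉ · v^t`, where
`c_{t,v} = ∏_{i=0}^{t-1} (v^t - v^i)/(v^t - 1)` and `lg` is the base-2 logarithm. -/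
theorem CAN_upper_bound (t k v : ℕ) (ht : 2 ≤ t) (hk : t ≤ k) (hv : IsPrimePow v) :
    (CAN t k v : ℝ) ≤
      (⌈(((t : ℝ) - 1) * Real.logb 2 k + Real.logb 2 (Real.exp 1 * t)) /
          Real.logb 2 (1 / (1 -
            ∏ i ∈ Finset.range t, ((v : ℝ) ^ t - (v : ℝ) ^ i) / ((v : ℝ) ^ t - 1)))⌉ : ℝ)
        * (v : ℝ) ^ t := by
  change _ ≤ (⌈_ / Real.logb 2 (1 / (1 - independenceProb v t t))⌉ : ℝ) * _
  rw [sub_one_mul_logb_add_logb_exp_mul (by omega) (by omega)]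
  set c := independenceProb v t t
  set X := Real.exp 1 * (t * k ^ (t - 1)) with hX_def
  have hc0 : 0 < c := independenceProb_pos hv.two_le (le_refl t)
  have hc1 : c < 1 := independenceProb_lt_one hv.two_le ht (le_refl t)
  have hX : 1 ≤ X := one_le_mul_of_one_le_of_one_le (Real.one_le_exp zero_le_one)
    (by exact_mod_cast Nat.one_le_iff_ne_zero.2 (by simp; omega))
  set R := ⌈Real.logb 2 X / Real.logb 2 (1 / (1 - c))⌉
  have hR0 : 0 ≤ R := Int.ceil_nonneg (div_nonneg (Real.logb_nonneg one_lt_two hX)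
    (Real.logb_nonneg one_lt_two (one_le_one_div (by linarith) (by linarith))))
  have hCAN : CAN t k v ≤ R.toNat * v ^ t := CAN_le_of_exp_mul_le ht hk hv <|
    calc _ ≤ X * (1 - c) ^ R.toNat :=
          mul_le_mul_of_nonneg_right (by
            rw [hX_def]; gcongr; exact_mod_cast Nat.choose_le_pow k (t - 1))
            (pow_nonneg (by linarith) _)
      _ ≤ 1 := mul_pow_toNat_ceil_le_one (by linarith) (by linarith) (by linarith)
  calc (CAN t k v : ℝ) ≤ ((R.toNat * v ^ t : ℕ) : ℝ) := by exact_mod_cast hCAN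
    _ = R * v ^ t := by
      rw [Nat.cast_mul, ← Int.cast_natCast R.toNat, Int.toNat_of_nonneg hR0, Nat.cast_pow]
end
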